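/- arXiv:1305.7510 — 6 statements merged into one kernel-verified Lean document; each statement's English description precedes it below -/
import Mathlib

section
/- For every fixed q > -1, the function x ↦ x·V_q'(x)/V_q(x) is strictly decreasing on (0,∞). -/
open Real MeasureTheory Set

/-- The one-dimensional regularization of the Coulomb potential:
`V q x = (2 e^{x²} / Γ(q+1)) ∫_x^∞ e^{-t²} (t² - x²)^q dt`. -/
noncomputable def V (q x : ℝ) : ℝ :=
  (2 * Real.exp (x ^ 2) / Real.Gamma (q + 1)) *
    ∫ t in Set.Ioi x, Real.exp (-t ^ 2) * (t ^ 2 - x ^ 2) ^ q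

open Filter Metric
open scoped Topology ENNReal



noncomputable def Phi (p l : ℝ) : ℝ :=
  ∫ r in Ioi (0:ℝ), Real.exp (-(l * r)) * r ^ p / Real.sqrt (1 + r)

lemma integrable_base {p l : ℝ} (hp : -1 < p) (hl : 0 < l) :
    IntegrableOn (fun r : ℝ => r ^ p * Real.exp (-(l * r))) (Ioi 0) := by
  have h := integrableOn_rpow_mul_exp_neg_mul_rpow hp one_pos hl
  refine h.congr_fun (fun x hx => ?_) measurableSet_Ioi
  simp only [Real.rpow_one]; ring_nf

lemma integrable_aux {p l : ℝ} (hp : -1 < p) (hl : 0 < l) {d : ℝ → ℝ}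
    (hd : ContinuousOn d (Ioi 0)) (hd1 : ∀ r ∈ Ioi (0:ℝ), 1 ≤ d r) :
    IntegrableOn (fun r : ℝ => Real.exp (-(l * r)) * r ^ p / d r) (Ioi 0) := by
  have hmeas : AEStronglyMeasurable (fun r : ℝ => Real.exp (-(l * r)) * r ^ p / d r)
      (volume.restrict (Ioi 0)) := by
    refine ContinuousOn.aestronglyMeasurable ?_ measurableSet_Ioi
    refine ContinuousOn.div ?_ hd (fun r hr => by linarith [hd1 r hr])
    refine ContinuousOn.mul (by fun_prop) ?_
    exact fun r hr => (Real.continuousAt_rpow_const r p (Or.inl (ne_of_gt hr))).continuousWithinAt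
  refine Integrable.mono' (integrable_base hp hl) hmeas ?_
  filter_upwards [ae_restrict_mem measurableSet_Ioi] with r hr
  have hr0 : (0:ℝ) < r := hr
  have h1 : (1:ℝ) ≤ d r := hd1 r hr
  have hrp : (0:ℝ) < r ^ p := Real.rpow_pos_of_pos hr0 p
  have he : (0:ℝ) < Real.exp (-(l * r)) := Real.exp_pos _
  rw [Real.norm_eq_abs, abs_of_nonneg (by positivity)]
  rw [div_le_iff₀ (by linarith)]
  nlinarith [mul_le_mul_of_nonneg_left h1 (le_of_lt (mul_pos he hrp))]

lemma integral_pos_aux {f : ℝ → ℝ} (hi : IntegrableOn f (Ioi 0))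
    (hpos : ∀ r ∈ Ioi (0:ℝ), 0 < f r) :
    0 < ∫ r in Ioi (0:ℝ), f r := by
  have hnn : 0 ≤ᵐ[volume.restrict (Ioi 0)] f := by
    filter_upwards [ae_restrict_mem measurableSet_Ioi] with r hr
    exact (hpos r hr).le
  rw [setIntegral_pos_iff_support_of_nonneg_ae hnn hi]
  have hsub : Ioi (0:ℝ) ⊆ Function.support f ∩ Ioi 0 :=
      fun x hx => ⟨ne_of_gt (hpos x hx), hx⟩
  calc (0:ℝ≥0∞) < volume (Ioi (0:ℝ)) := by simp
    _ ≤ volume (Function.support f ∩ Ioi 0) := measure_mono hsub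


lemma Phi_def (p l : ℝ) : Phi p l = ∫ r in Ioi (0:ℝ), Real.exp (-(l * r)) * r ^ p / Real.sqrt (1 + r) := rfl

lemma cont_sqrt_shift (c : ℝ) : ContinuousOn (fun r : ℝ => Real.sqrt (1 + r / c)) (Ioi 0) := by
  fun_prop

lemma one_le_sqrt_shift {c : ℝ} (hc : 0 < c) {r : ℝ} (hr : r ∈ Ioi (0:ℝ)) :
    1 ≤ Real.sqrt (1 + r / c) := by
  rw [show (1:ℝ) = Real.sqrt 1 by simp]
  apply Real.sqrt_le_sqrt
  have : 0 < r / c := div_pos hr hc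
  simp only [Real.sqrt_one]
  linarith

lemma integrable_phi {p l : ℝ} (hp : -1 < p) (hl : 0 < l) :
    IntegrableOn (fun r : ℝ => Real.exp (-(l * r)) * r ^ p / Real.sqrt (1 + r)) (Ioi 0) := by
  have h := integrable_aux hp hl (d := fun r => Real.sqrt (1 + r)) (by fun_prop)
    (fun r hr => by
      rw [show (1:ℝ) = Real.sqrt 1 by simp]
      exact Real.sqrt_le_sqrt (by simp; linarith [mem_Ioi.mp hr]))
  exact h

lemma Phi_pos {p l : ℝ} (hp : -1 < p) (hl : 0 < l) : 0 < Phi p l := by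
  rw [Phi_def]
  refine integral_pos_aux (integrable_phi hp hl) (fun r hr => ?_)
  have hr0 : (0:ℝ) < r := hr
  have : (0:ℝ) < Real.sqrt (1 + r) := Real.sqrt_pos.mpr (by linarith)
  positivity

lemma aesm_phi (p m : ℝ) :
    AEStronglyMeasurable (fun r : ℝ => Real.exp (-(m * r)) * r ^ p / Real.sqrt (1 + r))
      (volume.restrict (Ioi 0)) := by
  refine ContinuousOn.aestronglyMeasurable ?_ measurableSet_Ioi
  refine ContinuousOn.div (by
    refine ContinuousOn.mul (by fun_prop) ?_
    exact fun r hr => (Real.continuousAt_rpow_const r p (Or.inl (ne_of_gt hr))).continuousWithinAt)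
    (by fun_prop) ?_
  intro r hr
  have hr0 : (0:ℝ) < r := hr
  exact ne_of_gt (Real.sqrt_pos.mpr (by linarith))

lemma hasDerivAt_Phi {p l : ℝ} (hp : -1 < p) (hl : 0 < l) :
    HasDerivAt (Phi p) (-(Phi (p+1) l)) l := by
  set F : ℝ → ℝ → ℝ := fun m r => Real.exp (-(m * r)) * r ^ p / Real.sqrt (1 + r) with hF
  set F' : ℝ → ℝ → ℝ := fun m r => (-r) * (Real.exp (-(m * r)) * r ^ p / Real.sqrt (1 + r)) with hF'
  set bound : ℝ → ℝ := fun r => r ^ (p+1) * Real.exp (-(l/2 * r)) with hbd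
  have h1 : ∀ᶠ m in 𝓝 l, AEStronglyMeasurable (F m) (volume.restrict (Ioi 0)) :=
    Eventually.of_forall fun m => aesm_phi p m
  have h2 : Integrable (F l) (volume.restrict (Ioi 0)) := integrable_phi hp hl
  have h3 : AEStronglyMeasurable (F' l) (volume.restrict (Ioi 0)) := by
    have : Continuous (fun r : ℝ => -r) := by fun_prop
    exact (this.aestronglyMeasurable).mul (aesm_phi p l)
  have h4 : ∀ᵐ r ∂(volume.restrict (Ioi (0:ℝ))), ∀ m ∈ ball l (l/2), ‖F' m r‖ ≤ bound r := by
    filter_upwards [ae_restrict_mem measurableSet_Ioi] with r hr m hm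
    have hr0 : (0:ℝ) < r := hr
    have hm2 : l/2 < m := by
      rw [mem_ball, Real.dist_eq, abs_lt] at hm
      linarith [hm.1]
    have hs1 : (1:ℝ) ≤ Real.sqrt (1 + r) := by
      have := Real.sqrt_le_sqrt (show (1:ℝ) ≤ 1 + r by linarith)
      simpa using this
    have hsp : (0:ℝ) < Real.sqrt (1 + r) := by linarith
    have hrp : (0:ℝ) < r ^ p := Real.rpow_pos_of_pos hr0 p
    have hexple : Real.exp (-(m * r)) ≤ Real.exp (-(l/2 * r)) := by
      apply Real.exp_le_exp.mpr
      nlinarith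
    simp only [hF', hbd, Real.norm_eq_abs]
    rw [abs_mul, abs_neg, abs_of_nonneg hr0.le, abs_of_nonneg (by positivity)]
    have hXle : Real.exp (-(m * r)) * r ^ p / Real.sqrt (1 + r)
        ≤ Real.exp (-(l/2 * r)) * r ^ p := by
      rw [div_le_iff₀ hsp]
      nlinarith [mul_le_mul_of_nonneg_right hexple hrp.le,
        mul_le_mul_of_nonneg_left hs1
          (by positivity : (0:ℝ) ≤ Real.exp (-(l/2 * r)) * r ^ p)]
    calc r * (Real.exp (-(m * r)) * r ^ p / Real.sqrt (1 + r))
        ≤ r * (Real.exp (-(l/2 * r)) * r ^ p) := by nlinarith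
      _ = r ^ (p+1) * Real.exp (-(l/2 * r)) := by
          rw [Real.rpow_add_one (ne_of_gt hr0)]; ring
  have h5 : Integrable bound (volume.restrict (Ioi 0)) :=
    integrable_base (by linarith : (-1:ℝ) < p + 1) (half_pos hl)
  have h6 : ∀ᵐ r ∂(volume.restrict (Ioi (0:ℝ))), ∀ m ∈ ball l (l/2),
      HasDerivAt (fun m => F m r) (F' m r) m := by
    filter_upwards [ae_restrict_mem measurableSet_Ioi] with r hr m hm
    have hd1 : HasDerivAt (fun m : ℝ => -(m * r)) (-r) m := (hasDerivAt_mul_const r).neg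
    have hd2 : HasDerivAt (fun m : ℝ => Real.exp (-(m * r)))
        (Real.exp (-(m * r)) * (-r)) m := hd1.exp
    have hd3 := hd2.mul_const (r ^ p / Real.sqrt (1 + r))
    simp only [hF, hF', mul_div_assoc]
    refine hd3.congr_deriv ?_
    ring
  have key := hasDerivAt_integral_of_dominated_loc_of_deriv_le (ball_mem_nhds l (half_pos hl)) h1 h2 h3 h4 h5 h6
  obtain ⟨-, hd⟩ := key
  have heq : (∫ r in Ioi (0:ℝ), F' l r) = -(Phi (p+1) l) := by
    rw [Phi_def, ← integral_neg]
    refine setIntegral_congr_fun measurableSet_Ioi (fun r hr => ?_)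
    have hr0 : (0:ℝ) < r := hr
    simp only [hF']
    rw [Real.rpow_add_one (ne_of_gt hr0)]
    ring
  rw [heq] at hd
  exact hd


/-- Strict Chebyshev / correlation inequality on `(0,∞)`. -/
lemma chebyshev_strict {F g : ℝ → ℝ}
    (hF : IntegrableOn F (Ioi 0)) (hfF : IntegrableOn (fun s => s * F s) (Ioi 0))
    (hgF : IntegrableOn (fun s => g s * F s) (Ioi 0))
    (hfgF : IntegrableOn (fun s => s * g s * F s) (Ioi 0))
    (hFpos : ∀ s ∈ Ioi (0:ℝ), 0 < F s)
    (hg : StrictMonoOn g (Ioi 0)) :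
    (∫ s in Ioi (0:ℝ), s * F s) * ∫ s in Ioi (0:ℝ), g s * F s <
      (∫ s in Ioi (0:ℝ), s * g s * F s) * ∫ s in Ioi (0:ℝ), F s := by
  set μ : Measure ℝ := volume.restrict (Ioi 0) with hμ
  set G : ℝ × ℝ → ℝ := fun z => (z.1 - z.2) * (g z.1 - g z.2) * (F z.1 * F z.2) with hG
  have hint1 : Integrable (fun z : ℝ × ℝ => (z.1 * g z.1 * F z.1) * F z.2) (μ.prod μ) :=
    hfgF.mul_prod hF
  have hint2 : Integrable (fun z : ℝ × ℝ => F z.1 * (z.2 * g z.2 * F z.2)) (μ.prod μ) :=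
    hF.mul_prod hfgF
  have hint3 : Integrable (fun z : ℝ × ℝ => (z.1 * F z.1) * (g z.2 * F z.2)) (μ.prod μ) :=
    hfF.mul_prod hgF
  have hint4 : Integrable (fun z : ℝ × ℝ => (g z.1 * F z.1) * (z.2 * F z.2)) (μ.prod μ) :=
    hgF.mul_prod hfF
  have hGeq : G = fun z : ℝ × ℝ =>
      ((z.1 * g z.1 * F z.1) * F z.2 + F z.1 * (z.2 * g z.2 * F z.2))
        - ((z.1 * F z.1) * (g z.2 * F z.2) + (g z.1 * F z.1) * (z.2 * F z.2)) := by
    funext z; simp only [hG]; ring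
  have hGint : Integrable G (μ.prod μ) := by
    rw [hGeq]; exact (hint1.add hint2).sub (hint3.add hint4)
  have hintL : Integrable (fun z : ℝ × ℝ =>
      z.1 * g z.1 * F z.1 * F z.2 + F z.1 * (z.2 * g z.2 * F z.2)) (μ.prod μ) :=
    hint1.add hint2
  have hintR : Integrable (fun z : ℝ × ℝ =>
      z.1 * F z.1 * (g z.2 * F z.2) + g z.1 * F z.1 * (z.2 * F z.2)) (μ.prod μ) :=
    hint3.add hint4
  have eA : (∫ z : ℝ × ℝ, z.1 * g z.1 * F z.1 * F z.2 ∂(μ.prod μ))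
      = (∫ s in Ioi (0:ℝ), s * g s * F s) * ∫ s in Ioi (0:ℝ), F s :=
    integral_prod_mul (fun s => s * g s * F s) F
  have eB : (∫ z : ℝ × ℝ, F z.1 * (z.2 * g z.2 * F z.2) ∂(μ.prod μ))
      = (∫ s in Ioi (0:ℝ), F s) * ∫ s in Ioi (0:ℝ), s * g s * F s :=
    integral_prod_mul F (fun s => s * g s * F s)
  have eC : (∫ z : ℝ × ℝ, z.1 * F z.1 * (g z.2 * F z.2) ∂(μ.prod μ))
      = (∫ s in Ioi (0:ℝ), s * F s) * ∫ s in Ioi (0:ℝ), g s * F s :=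
    integral_prod_mul (fun s => s * F s) (fun s => g s * F s)
  have eD : (∫ z : ℝ × ℝ, g z.1 * F z.1 * (z.2 * F z.2) ∂(μ.prod μ))
      = (∫ s in Ioi (0:ℝ), g s * F s) * ∫ s in Ioi (0:ℝ), s * F s :=
    integral_prod_mul (fun s => g s * F s) (fun s => s * F s)
  have expand : ∫ z, G z ∂(μ.prod μ)
      = 2 * ((∫ s in Ioi (0:ℝ), s * g s * F s) * (∫ s in Ioi (0:ℝ), F s))
        - 2 * ((∫ s in Ioi (0:ℝ), s * F s) * (∫ s in Ioi (0:ℝ), g s * F s)) := by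
    have step1 : ∫ z, G z ∂(μ.prod μ)
        = (∫ z : ℝ × ℝ, (z.1 * g z.1 * F z.1 * F z.2
            + F z.1 * (z.2 * g z.2 * F z.2)) ∂(μ.prod μ))
          - ∫ z : ℝ × ℝ, (z.1 * F z.1 * (g z.2 * F z.2)
            + g z.1 * F z.1 * (z.2 * F z.2)) ∂(μ.prod μ) := by
      rw [hGeq]; exact integral_sub hintL hintR
    have step2 := integral_add hint1 hint2
    have step3 := integral_add hint3 hint4
    rw [step1, step2, step3, eA, eB, eC, eD]; ring
  have hGnn : 0 ≤ᵐ[μ.prod μ] G := by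
    rw [hμ, Measure.prod_restrict]
    filter_upwards [ae_restrict_mem (measurableSet_Ioi.prod measurableSet_Ioi)] with z hz
    obtain ⟨h1, h2⟩ := hz
    rcases lt_trichotomy z.1 z.2 with h | h | h
    · have hgh := hg h1 h2 h
      have hpr := mul_pos (hFpos _ h1) (hFpos _ h2)
      show 0 ≤ (z.1 - z.2) * (g z.1 - g z.2) * (F z.1 * F z.2)
      nlinarith [mul_pos (mul_pos (sub_pos.mpr h) (sub_pos.mpr hgh)) hpr]
    · show 0 ≤ (z.1 - z.2) * (g z.1 - g z.2) * (F z.1 * F z.2)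
      rw [h]; simp
    · have hgh := hg h2 h1 h
      have hpr := mul_pos (hFpos _ h1) (hFpos _ h2)
      show 0 ≤ (z.1 - z.2) * (g z.1 - g z.2) * (F z.1 * F z.2)
      nlinarith [mul_pos (mul_pos (sub_pos.mpr h) (sub_pos.mpr hgh)) hpr]
  have hGpos : 0 < ∫ z, G z ∂(μ.prod μ) := by
    rw [integral_pos_iff_support_of_nonneg_ae hGnn hGint]
    have hsub : Ioc (1:ℝ) 2 ×ˢ Ioc (3:ℝ) 4 ⊆ Function.support G := by
      rintro ⟨a, b⟩ ⟨ha, hb⟩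
      have ha0 : (0:ℝ) < a := lt_trans one_pos ha.1
      have hb0 : (0:ℝ) < b := by linarith [hb.1]
      have hab : a < b := by linarith [ha.2, hb.1]
      have hgab := hg (mem_Ioi.mpr ha0) (mem_Ioi.mpr hb0) hab
      have hFa := hFpos _ (mem_Ioi.mpr ha0)
      have hFb := hFpos _ (mem_Ioi.mpr hb0)
      have hpos2 : 0 < (a - b) * (g a - g b) * (F a * F b) := by
        nlinarith [mul_pos (mul_pos (sub_pos.mpr hab) (sub_pos.mpr hgab)) (mul_pos hFa hFb)]
      show G (a, b) ≠ 0
      show (a - b) * (g a - g b) * (F a * F b) ≠ 0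
      exact ne_of_gt hpos2
    have hle : (μ.prod μ) (Ioc (1:ℝ) 2 ×ˢ Ioc (3:ℝ) 4) ≤ (μ.prod μ) (Function.support G) :=
      measure_mono hsub
    refine lt_of_lt_of_le ?_ hle
    rw [Measure.prod_prod, hμ, Measure.restrict_apply measurableSet_Ioc,
      Measure.restrict_apply measurableSet_Ioc,
      show Ioc (1:ℝ) 2 ∩ Ioi 0 = Ioc (1:ℝ) 2 by
        rw [inter_eq_left]; exact fun x hx => lt_trans one_pos hx.1,
      show Ioc (3:ℝ) 4 ∩ Ioi 0 = Ioc (3:ℝ) 4 by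
        rw [inter_eq_left]; intro x hx; have := hx.1; exact mem_Ioi.mpr (by linarith),
      Real.volume_Ioc, Real.volume_Ioc]
    norm_num
  linarith [expand ▸ hGpos]

/-- Scaling: `∫₀^∞ e^{-s} s^p / √(1+s/l) ds = l^{p+1} ∫₀^∞ e^{-lr} r^p / √(1+r) dr`. -/
lemma scaling {p l : ℝ} (hl : 0 < l) :
    (∫ s in Ioi (0:ℝ), Real.exp (-s) * s ^ p / Real.sqrt (1 + s / l))
      = l ^ (p+1) * ∫ r in Ioi (0:ℝ), Real.exp (-(l * r)) * r ^ p / Real.sqrt (1 + r) := by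
  have h := integral_comp_mul_left_Ioi
    (fun s => Real.exp (-s) * s ^ p / Real.sqrt (1 + s / l)) 0 hl
  rw [mul_zero] at h
  have h' := congrArg (fun t => l * t) h
  simp only [smul_eq_mul, ← mul_assoc, mul_inv_cancel₀ (ne_of_gt hl), one_mul] at h'
  have h2 : (∫ r in Ioi (0:ℝ),
      Real.exp (-(l * r)) * (l * r) ^ p / Real.sqrt (1 + l * r / l))
      = l ^ p * ∫ r in Ioi (0:ℝ), Real.exp (-(l * r)) * r ^ p / Real.sqrt (1 + r) := by
    rw [← integral_const_mul]
    refine setIntegral_congr_fun measurableSet_Ioi (fun r hr => ?_)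
    have hr0 : (0:ℝ) < r := hr
    rw [mul_comm l r, mul_div_cancel_right₀ r (ne_of_gt hl), Real.mul_rpow hr0.le hl.le]
    ring
  rw [← h', h2, Real.rpow_add_one (ne_of_gt hl)]
  ring


lemma subst {q x : ℝ} (hx : 0 < x) :
    (∫ t in Ioi x, Real.exp (-t ^ 2) * (t ^ 2 - x ^ 2) ^ q)
      = (Real.exp (-x ^ 2) * x ^ (2*q+1) / 2) *
          ∫ r in Ioi (0:ℝ), Real.exp (-(x ^ 2 * r)) * r ^ q / Real.sqrt (1 + r) := by
  set φ : ℝ → ℝ := fun r => x * Real.sqrt (1 + r) with hφ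
  set φ' : ℝ → ℝ := fun r => x * (1 / (2 * Real.sqrt (1 + r))) with hφ'
  have himg : φ '' Ioi 0 = Ioi x := by
    ext t
    constructor
    · rintro ⟨r, hr, rfl⟩
      have hr0 : (0:ℝ) < r := hr
      have h1 : (1:ℝ) < Real.sqrt (1 + r) := by
        have := Real.sqrt_lt_sqrt (by norm_num : (0:ℝ) ≤ 1) (by linarith : (1:ℝ) < 1 + r)
        simpa using this
      have := lt_mul_of_one_lt_right hx h1
      simpa [hφ] using this
    · intro ht
      have hxt : x < t := ht
      have htx : (1:ℝ) < t / x := (one_lt_div hx).mpr hxt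
      refine ⟨(t / x) ^ 2 - 1, ?_, ?_⟩
      · show (0:ℝ) < (t / x) ^ 2 - 1
        nlinarith
      · show x * Real.sqrt (1 + ((t / x) ^ 2 - 1)) = t
        rw [show (1:ℝ) + ((t / x) ^ 2 - 1) = (t / x) ^ 2 by ring,
          Real.sqrt_sq (by positivity : (0:ℝ) ≤ t / x), mul_comm,
          div_mul_cancel₀ t (ne_of_gt hx)]
  have hderiv : ∀ r ∈ Ioi (0:ℝ), HasDerivWithinAt φ (φ' r) (Ioi 0) r := by
    intro r hr
    have hr0 : (0:ℝ) < r := hr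
    have h1 : HasDerivAt (fun r : ℝ => 1 + r) 1 r := by
      simpa using (hasDerivAt_id r).const_add (1:ℝ)
    have h2 : HasDerivAt (fun r : ℝ => Real.sqrt (1 + r))
        (1 / (2 * Real.sqrt (1 + r)) * 1) r :=
      (Real.hasDerivAt_sqrt (by positivity : (1:ℝ) + r ≠ 0)).comp r h1
    have h3 := h2.const_mul x
    simp only [mul_one] at h3
    exact h3.hasDerivWithinAt
  have hinj : InjOn φ (Ioi 0) := by
    intro a ha b hb hab
    have h1 : Real.sqrt (1 + a) = Real.sqrt (1 + b) := mul_left_cancel₀ (ne_of_gt hx) hab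
    have ha0 : (0:ℝ) < a := ha
    have hb0 : (0:ℝ) < b := hb
    have h2 : (1:ℝ) + a = 1 + b := by
      have := congrArg (fun y : ℝ => y ^ 2) h1
      simpa [Real.sq_sqrt (by linarith : (0:ℝ) ≤ 1 + a),
        Real.sq_sqrt (by linarith : (0:ℝ) ≤ 1 + b)] using this
    linarith
  rw [← himg, integral_image_eq_integral_abs_deriv_smul measurableSet_Ioi hderiv hinj,
    ← integral_const_mul]
  refine setIntegral_congr_fun measurableSet_Ioi (fun r hr => ?_)
  have hr0 : (0:ℝ) < r := hr
  have hs : (0:ℝ) < Real.sqrt (1 + r) := Real.sqrt_pos.mpr (by linarith)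
  have hsq : Real.sqrt (1 + r) ^ 2 = 1 + r := Real.sq_sqrt (by linarith)
  have e1 : φ r ^ 2 = x ^ 2 * (1 + r) := by
    simp only [hφ]; rw [mul_pow, hsq]
  have e2 : Real.exp (-φ r ^ 2) = Real.exp (-x ^ 2) * Real.exp (-(x ^ 2 * r)) := by
    rw [e1, ← Real.exp_add]; congr 1; ring
  have e3 : (φ r ^ 2 - x ^ 2) ^ q = x ^ (2*q) * r ^ q := by
    rw [e1, show x ^ 2 * (1 + r) - x ^ 2 = x ^ 2 * r by ring,
      Real.mul_rpow (by positivity) hr0.le]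
    congr 1
    rw [← Real.rpow_natCast x 2, ← Real.rpow_mul hx.le]
    norm_num
  have e4 : |φ' r| = x / (2 * Real.sqrt (1 + r)) := by
    simp only [hφ']
    rw [abs_of_pos (by positivity)]
    ring
  rw [smul_eq_mul, e4, e2, e3]
  rw [Real.rpow_add_one (ne_of_gt hx) (2*q)]
  field_simp

noncomputable def Vrep (q x : ℝ) : ℝ := x ^ (2*q+1) * Phi q (x ^ 2) / Real.Gamma (q+1)

lemma V_eq {q x : ℝ} (hx : 0 < x) : V q x = Vrep q x := by
  unfold V Vrep
  rw [subst hx]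
  show (2 * Real.exp (x ^ 2) / Real.Gamma (q + 1)) *
      ((Real.exp (-x ^ 2) * x ^ (2*q+1) / 2) * Phi q (x ^ 2)) = _
  have h : (2 * Real.exp (x ^ 2) / Real.Gamma (q+1)) *
      ((Real.exp (-x ^ 2) * x ^ (2*q+1) / 2) * Phi q (x ^ 2))
      = (Real.exp (x ^ 2) * Real.exp (-x ^ 2)) *
        (x ^ (2*q+1) * Phi q (x ^ 2) / Real.Gamma (q+1)) := by ring
  rw [h, ← Real.exp_add]
  simp


lemma one_le_sqrt_shiftc {c : ℝ} (hc : 0 < c) {r : ℝ} (hr : r ∈ Ioi (0:ℝ)) :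
    1 ≤ Real.sqrt (1 + r / c) := by
  have h : (1:ℝ) ≤ 1 + r / c := by
    have : 0 < r / c := div_pos hr hc
    linarith
  have := Real.sqrt_le_sqrt h
  simpa using this

lemma integrable_sigma {p c : ℝ} (hp : -1 < p) (hc : 0 < c) :
    IntegrableOn (fun s : ℝ => Real.exp (-s) * s ^ p / Real.sqrt (1 + s / c)) (Ioi 0) := by
  have h := integrable_aux hp one_pos (d := fun s => Real.sqrt (1 + s / c))
    (by fun_prop) (fun r hr => one_le_sqrt_shiftc hc hr)
  exact h.congr_fun (fun s hs => by norm_num) measurableSet_Ioi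

lemma sigma_pos {p c : ℝ} (hp : -1 < p) (hc : 0 < c) :
    0 < ∫ s in Ioi (0:ℝ), Real.exp (-s) * s ^ p / Real.sqrt (1 + s / c) := by
  refine integral_pos_aux (integrable_sigma hp hc) (fun s hs => ?_)
  have hs0 : (0:ℝ) < s := hs
  have h1 : (0:ℝ) < Real.sqrt (1 + s / c) := by
    have := one_le_sqrt_shiftc hc hs
    linarith
  have h2 : (0:ℝ) < s ^ p := Real.rpow_pos_of_pos hs0 p
  positivity

lemma hasDerivAt_V {q x : ℝ} (hq : -1 < q) (hx : 0 < x) :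
    HasDerivAt (V q)
      (((2*q+1) * x ^ (2*q) * Phi q (x ^ 2) - 2 * x ^ (2*q+2) * Phi (q+1) (x ^ 2))
        / Real.Gamma (q+1)) x := by
  have hx2 : (0:ℝ) < x ^ 2 := by positivity
  have hL : HasDerivAt (Phi q) (-(Phi (q+1) (x ^ 2))) (x ^ 2) := hasDerivAt_Phi hq hx2
  have hsq : HasDerivAt (fun y : ℝ => y ^ 2) (2 * x) x := by
    simpa using hasDerivAt_pow 2 x
  have hcomp : HasDerivAt (fun y : ℝ => Phi q (y ^ 2))
      (-(Phi (q+1) (x ^ 2)) * (2 * x)) x := by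
    exact HasDerivAt.comp (𝕜 := ℝ) (𝕜' := ℝ) (h := fun y : ℝ => y ^ 2) (h₂ := Phi q)
      (h₂' := -(Phi (q+1) (x ^ 2))) (h' := 2*x) (x := x) hL hsq
  have hpow : HasDerivAt (fun y : ℝ => y ^ (2*q+1)) ((2*q+1) * x ^ (2*q+1-1)) x :=
    Real.hasDerivAt_rpow_const (Or.inl (ne_of_gt hx))
  have hmul := (hpow.mul hcomp).div_const (Real.Gamma (q+1))
  have heq : V q =ᶠ[𝓝 x] fun y => y ^ (2*q+1) * Phi q (y ^ 2) / Real.Gamma (q+1) :=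
    eventually_of_mem (Ioi_mem_nhds hx) (fun y hy => V_eq hy)
  refine HasDerivAt.congr_of_eventuallyEq ?_ heq
  refine hmul.congr_deriv ?_
  symm
  rw [show 2*q+1-1 = 2*q by ring,
    show 2*q+2 = (2*q+1)+1 by ring, Real.rpow_add_one (ne_of_gt hx)]
  ring

lemma g_mono {al be : ℝ} (ha : 0 < al) (hab : al < be) :
    StrictMonoOn (fun s => Real.sqrt (1 + s / al) / Real.sqrt (1 + s / be)) (Ioi 0) := by
  have hb : (0:ℝ) < be := lt_trans ha hab
  intro s hs t ht hst
  have hs0 : (0:ℝ) < s := hs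
  have ht0 : (0:ℝ) < t := ht
  have hsa : (0:ℝ) < 1 + s / al := by positivity
  have hsb : (0:ℝ) < 1 + s / be := by positivity
  have hta : (0:ℝ) < 1 + t / al := by positivity
  have htb : (0:ℝ) < 1 + t / be := by positivity
  show Real.sqrt (1 + s / al) / Real.sqrt (1 + s / be)
      < Real.sqrt (1 + t / al) / Real.sqrt (1 + t / be)
  rw [div_lt_div_iff₀ (Real.sqrt_pos.mpr hsb) (Real.sqrt_pos.mpr htb),
    ← Real.sqrt_mul hsa.le, ← Real.sqrt_mul hta.le]
  apply Real.sqrt_lt_sqrt (by positivity)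
  have key : s / al + t / be < t / al + s / be := by
    rw [div_add_div _ _ (ne_of_gt ha) (ne_of_gt hb),
      div_add_div _ _ (ne_of_gt ha) (ne_of_gt hb),
      div_lt_div_iff₀ (by positivity) (by positivity)]
    nlinarith [mul_pos (mul_pos (sub_pos.mpr hst) (sub_pos.mpr hab)) (mul_pos ha hb)]
  have expand : (1 + t / al) * (1 + s / be) - (1 + s / al) * (1 + t / be)
      = (t / al + s / be) - (s / al + t / be) := by
    field_simp
    ring
  linarith [expand, key]

theorem stmt_0 (q : ℝ) (hq : -1 < q) :
    StrictAntiOn (fun x => x * deriv (V q) x / V q x) (Set.Ioi (0 : ℝ)) := by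
  have hq1 : (0:ℝ) < q + 1 := by linarith
  have hq1' : (-1:ℝ) < q + 1 := by linarith
  set P : ℝ → ℝ := fun l => ∫ s in Ioi (0:ℝ), Real.exp (-s) * s ^ (q+1) / Real.sqrt (1 + s / l)
    with hP
  set Q : ℝ → ℝ := fun l => ∫ s in Ioi (0:ℝ), Real.exp (-s) * s ^ q / Real.sqrt (1 + s / l)
    with hQ
  have keyeq : ∀ x ∈ Ioi (0:ℝ),
      x * deriv (V q) x / V q x = (2*q+1) - 2 * (P (x ^ 2) / Q (x ^ 2)) := by
    intro x hx
    have hx0 : (0:ℝ) < x := hx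
    have hx2 : (0:ℝ) < x ^ 2 := by positivity
    have hd := hasDerivAt_V hq hx0
    have hder := hd.deriv
    have hV : V q x = x ^ (2*q+1) * Phi q (x ^ 2) / Real.Gamma (q+1) := V_eq hx0
    have hA : (0:ℝ) < Phi q (x ^ 2) := Phi_pos hq hx2
    have hB : (0:ℝ) < Phi (q+1) (x ^ 2) := Phi_pos hq1' hx2
    have hG : (0:ℝ) < Real.Gamma (q+1) := Real.Gamma_pos_of_pos hq1
    have hPe : P (x ^ 2) = (x ^ 2) ^ (q+1+1) * Phi (q+1) (x ^ 2) := scaling hx2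
    have hQe : Q (x ^ 2) = (x ^ 2) ^ (q+1) * Phi q (x ^ 2) := scaling hx2
    have hv : (0:ℝ) < (x ^ 2) ^ (q+1) := Real.rpow_pos_of_pos hx2 _
    have hPQ : P (x ^ 2) / Q (x ^ 2) = x ^ 2 * Phi (q+1) (x ^ 2) / Phi q (x ^ 2) := by
      rw [hPe, hQe, Real.rpow_add_one (ne_of_gt hx2)]
      field_simp
    rw [hder, hV, hPQ]
    have r1 : x ^ (2*q+1) = x ^ (2*q) * x := Real.rpow_add_one (ne_of_gt hx0) (2*q)
    have r2 : x ^ (2*q+2) = x ^ (2*q) * x * x := by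
      rw [show 2*q+2 = (2*q+1)+1 by ring, Real.rpow_add_one (ne_of_gt hx0), r1]
    have hu : (0:ℝ) < x ^ (2*q) := Real.rpow_pos_of_pos hx0 _
    rw [r1, r2]
    field_simp
  intro a ha b hb hab
  simp only []
  rw [keyeq a ha, keyeq b hb]
  have ha0 : (0:ℝ) < a := ha
  have hb0 : (0:ℝ) < b := hb
  have ha2 : (0:ℝ) < a ^ 2 := by positivity
  have hb2 : (0:ℝ) < b ^ 2 := by positivity
  have hab2 : a ^ 2 < b ^ 2 := by nlinarith
  have hQa : 0 < Q (a ^ 2) := sigma_pos hq ha2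
  have hQb : 0 < Q (b ^ 2) := sigma_pos hq hb2
  suffices h : P (a ^ 2) / Q (a ^ 2) < P (b ^ 2) / Q (b ^ 2) by linarith
  rw [div_lt_div_iff₀ hQa hQb]
  set F : ℝ → ℝ := fun s => Real.exp (-s) * s ^ q / Real.sqrt (1 + s / a ^ 2) with hF
  set g : ℝ → ℝ := fun s => Real.sqrt (1 + s / a ^ 2) / Real.sqrt (1 + s / b ^ 2) with hg
  have hsF : ∀ s ∈ Ioi (0:ℝ), Real.sqrt (1 + s / a ^ 2) ≠ 0 ∧ Real.sqrt (1 + s / b ^ 2) ≠ 0 := by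
    intro s hs
    constructor
    · have := one_le_sqrt_shiftc ha2 hs; intro h0; rw [h0] at this; linarith
    · have := one_le_sqrt_shiftc hb2 hs; intro h0; rw [h0] at this; linarith
  have e1 : (∫ s in Ioi (0:ℝ), s * F s) = P (a ^ 2) := by
    refine setIntegral_congr_fun measurableSet_Ioi (fun s hs => ?_)
    have hs0 : (0:ℝ) < s := hs
    simp only [hF]
    rw [Real.rpow_add_one (ne_of_gt hs0)]
    ring
  have e2 : (∫ s in Ioi (0:ℝ), g s * F s) = Q (b ^ 2) := by
    refine setIntegral_congr_fun measurableSet_Ioi (fun s hs => ?_)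
    obtain ⟨h1, h2⟩ := hsF s hs
    simp only [hF, hg]
    generalize Real.sqrt (1 + s / a ^ 2) = sa at h1 ⊢
    generalize Real.sqrt (1 + s / b ^ 2) = sb at h2 ⊢
    field_simp
  have e3 : (∫ s in Ioi (0:ℝ), s * g s * F s) = P (b ^ 2) := by
    refine setIntegral_congr_fun measurableSet_Ioi (fun s hs => ?_)
    have hs0 : (0:ℝ) < s := hs
    obtain ⟨h1, h2⟩ := hsF s hs
    simp only [hF, hg]
    rw [Real.rpow_add_one (ne_of_gt hs0)]
    generalize Real.sqrt (1 + s / a ^ 2) = sa at h1 ⊢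
    generalize Real.sqrt (1 + s / b ^ 2) = sb at h2 ⊢
    field_simp
  have e4 : (∫ s in Ioi (0:ℝ), F s) = Q (a ^ 2) := rfl
  have hFint : IntegrableOn F (Ioi 0) := integrable_sigma hq ha2
  have hfFint : IntegrableOn (fun s => s * F s) (Ioi 0) := by
    refine (integrable_sigma hq1' ha2).congr_fun (fun s hs => ?_) measurableSet_Ioi
    have hs0 : (0:ℝ) < s := hs
    simp only [hF]
    rw [Real.rpow_add_one (ne_of_gt hs0)]
    ring
  have hgFint : IntegrableOn (fun s => g s * F s) (Ioi 0) := by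
    refine (integrable_sigma hq hb2).congr_fun (fun s hs => ?_) measurableSet_Ioi
    obtain ⟨h1, h2⟩ := hsF s hs
    simp only [hF, hg]
    generalize Real.sqrt (1 + s / a ^ 2) = sa at h1 ⊢
    generalize Real.sqrt (1 + s / b ^ 2) = sb at h2 ⊢
    field_simp
  have hfgFint : IntegrableOn (fun s => s * g s * F s) (Ioi 0) := by
    refine (integrable_sigma hq1' hb2).congr_fun (fun s hs => ?_) measurableSet_Ioi
    have hs0 : (0:ℝ) < s := hs
    obtain ⟨h1, h2⟩ := hsF s hs
    simp only [hF, hg]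
    rw [Real.rpow_add_one (ne_of_gt hs0)]
    generalize Real.sqrt (1 + s / a ^ 2) = sa at h1 ⊢
    generalize Real.sqrt (1 + s / b ^ 2) = sb at h2 ⊢
    field_simp
  have hFpos : ∀ s ∈ Ioi (0:ℝ), 0 < F s := by
    intro s hs
    have hs0 : (0:ℝ) < s := hs
    have h1 : (0:ℝ) < Real.sqrt (1 + s / a ^ 2) := by
      have := one_le_sqrt_shiftc ha2 hs; linarith
    have h2 : (0:ℝ) < s ^ q := Real.rpow_pos_of_pos hs0 q
    simp only [hF]
    positivity
  have cheb := chebyshev_strict hFint hfFint hgFint hfgFint hFpos (g_mono ha2 hab2)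
  rw [e1, e2, e3] at cheb
  exact cheb
end

section
/- For every fixed q > -1, the function x ↦ x²·V_q'(x) is strictly decreasing on (0,∞). -/
open Real MeasureTheory Set

namespace CoulombAux

lemma meas_aux {q : ℝ} (x r : ℝ) :
    Measurable (fun s : ℝ => Real.exp (-s) * s ^ q * (x ^ 2 + s) ^ r) := by
  fun_prop

lemma integrableOn_gamma {q : ℝ} (hq : -1 < q) :
    IntegrableOn (fun s : ℝ => Real.exp (-s) * s ^ q) (Ioi 0) := by
  have h := Real.GammaIntegral_convergent (show (0:ℝ) < q + 1 by linarith)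
  simpa using h

lemma integrable_aux {q : ℝ} (hq : -1 < q) {x : ℝ} (hx : 0 < x) {r : ℝ} (hr : r ≤ 0) :
    IntegrableOn (fun s : ℝ => Real.exp (-s) * s ^ q * (x ^ 2 + s) ^ r) (Ioi 0) := by
  apply Integrable.mono (((integrableOn_gamma hq).const_mul ((x ^ 2) ^ r)))
    (meas_aux x r).aestronglyMeasurable
  filter_upwards [ae_restrict_mem measurableSet_Ioi] with s hs
  have hs0 : (0:ℝ) < s := hs
  have h1 : (0:ℝ) < x ^ 2 := by positivity
  have h2 : (x ^ 2 + s) ^ r ≤ (x ^ 2) ^ r :=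
    Real.rpow_le_rpow_of_nonpos h1 (by linarith) hr
  have hnn : (0:ℝ) ≤ Real.exp (-s) * s ^ q := by positivity
  rw [Real.norm_eq_abs, Real.norm_eq_abs, abs_of_nonneg (by positivity),
    abs_of_nonneg (by positivity)]
  calc Real.exp (-s) * s ^ q * (x ^ 2 + s) ^ r
      ≤ Real.exp (-s) * s ^ q * (x ^ 2) ^ r := by
        exact mul_le_mul_of_nonneg_left h2 hnn
    _ = (x ^ 2) ^ r * (Real.exp (-s) * s ^ q) := by ring

lemma meas_orig {q : ℝ} (x : ℝ) :
    Measurable (fun t : ℝ => Real.exp (-t ^ 2) * (t ^ 2 - x ^ 2) ^ q) := by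
  fun_prop

lemma integrableOn_orig {q : ℝ} (hq : -1 < q) {x : ℝ} (hx : 0 < x) :
    IntegrableOn (fun t : ℝ => Real.exp (-t ^ 2) * (t ^ 2 - x ^ 2) ^ q) (Ici x) := by
  rw [integrableOn_Ici_iff_integrableOn_Ioi,
    ← Ioc_union_Ioi_eq_Ioi (show x ≤ x + 1 by linarith), integrableOn_union]
  constructor
  · -- near the left endpoint, dominate by C * (t-x)^q
    set C : ℝ := max ((2 * x) ^ q) ((2 * x + 1) ^ q) with hC
    have hCpos : 0 < C := lt_max_of_lt_left (Real.rpow_pos_of_pos (by linarith) q)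
    have hint : IntegrableOn (fun t : ℝ => C * (t - x) ^ q) (Ioc x (x + 1)) := by
      have h0 : IntervalIntegrable (fun u : ℝ => u ^ q) volume 0 1 :=
        intervalIntegral.intervalIntegrable_rpow' hq
      have h1 := h0.comp_sub_right x
      rw [intervalIntegrable_iff_integrableOn_Ioc_of_le (by linarith)] at h1
      have h2 : IntegrableOn (fun t : ℝ => (t - x) ^ q) (Ioc x (x + 1)) := by
        simpa [zero_add, add_comm] using h1
      exact h2.const_mul C
    apply Integrable.mono hint (meas_orig x).aestronglyMeasurable
    filter_upwards [ae_restrict_mem measurableSet_Ioc] with t ht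
    obtain ⟨ht1, ht2⟩ := ht
    have htx : 0 < t - x := by linarith
    have htpos : 0 < t := by linarith
    have hfac : t ^ 2 - x ^ 2 = (t - x) * (t + x) := by ring
    have hrw : (t ^ 2 - x ^ 2) ^ q = (t - x) ^ q * (t + x) ^ q := by
      rw [hfac, Real.mul_rpow htx.le (by linarith)]
    have hb : (t + x) ^ q ≤ C := by
      rcases le_or_gt q 0 with h | h
      · exact le_trans (Real.rpow_le_rpow_of_nonpos (by linarith) (by linarith) h)
          (le_max_left _ _)
      · exact le_trans (Real.rpow_le_rpow (by linarith) (by linarith) h.le)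
          (le_max_right _ _)
    have hnn1 : (0:ℝ) ≤ Real.exp (-t ^ 2) * (t ^ 2 - x ^ 2) ^ q :=
      mul_nonneg (Real.exp_pos _).le (Real.rpow_nonneg (by nlinarith) q)
    have hnn2 : (0:ℝ) ≤ C * (t - x) ^ q :=
      mul_nonneg hCpos.le (Real.rpow_nonneg htx.le q)
    rw [Real.norm_eq_abs, Real.norm_eq_abs, abs_of_nonneg hnn1, abs_of_nonneg hnn2, hrw]
    have he : Real.exp (-t ^ 2) ≤ 1 := by
      rw [Real.exp_le_one_iff]; nlinarith
    calc Real.exp (-t ^ 2) * ((t - x) ^ q * (t + x) ^ q)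
        ≤ 1 * ((t - x) ^ q * C) := by
          apply mul_le_mul he (mul_le_mul_of_nonneg_left hb (by positivity)) (by positivity)
          norm_num
      _ = C * (t - x) ^ q := by ring
  · -- the tail
    rcases le_or_gt q 0 with h | h
    · -- dominate by (2x+1)^q * exp(-t²)
      have hint : Integrable (fun t : ℝ => (2 * x + 1) ^ q * Real.exp (-1 * t ^ 2)) :=
        (integrable_exp_neg_mul_sq one_pos).const_mul _
      apply Integrable.mono hint.integrableOn (meas_orig x).aestronglyMeasurable
      filter_upwards [ae_restrict_mem measurableSet_Ioi] with t ht
      have ht1 : x + 1 < t := ht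
      have h2 : (2 * x + 1 : ℝ) ≤ t ^ 2 - x ^ 2 := by nlinarith
      have hb : (t ^ 2 - x ^ 2) ^ q ≤ (2 * x + 1) ^ q :=
        Real.rpow_le_rpow_of_nonpos (by linarith) h2 h
      have hnn1 : (0:ℝ) ≤ Real.exp (-t ^ 2) * (t ^ 2 - x ^ 2) ^ q :=
        mul_nonneg (Real.exp_pos _).le (Real.rpow_nonneg (by nlinarith) q)
      have hnn2 : (0:ℝ) ≤ (2 * x + 1) ^ q * Real.exp (-1 * t ^ 2) :=
        mul_nonneg (Real.rpow_nonneg (by linarith) q) (Real.exp_pos _).le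
      rw [Real.norm_eq_abs, Real.norm_eq_abs, abs_of_nonneg hnn1, abs_of_nonneg hnn2]
      calc Real.exp (-t ^ 2) * (t ^ 2 - x ^ 2) ^ q
          ≤ Real.exp (-t ^ 2) * (2 * x + 1) ^ q :=
            mul_le_mul_of_nonneg_left hb (Real.exp_pos _).le
        _ = (2 * x + 1) ^ q * Real.exp (-1 * t ^ 2) := by rw [neg_one_mul]; ring
    · -- dominate by t^(2q) * exp(-t²)
      have hint := integrableOn_rpow_mul_exp_neg_mul_sq one_pos
        (show (-1:ℝ) < 2 * q by linarith)
      apply Integrable.mono (hint.mono_set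
        (Ioi_subset_Ioi (by linarith : (0:ℝ) ≤ x + 1)))
        (meas_orig x).aestronglyMeasurable
      filter_upwards [ae_restrict_mem measurableSet_Ioi] with t ht
      have ht1 : x + 1 < t := ht
      have htpos : (0:ℝ) < t := by linarith
      have h2q : ((t ^ 2 : ℝ)) ^ q = t ^ (2 * q) := by
        rw [← Real.rpow_natCast t 2, ← Real.rpow_mul htpos.le]; norm_num
      have hb : (t ^ 2 - x ^ 2) ^ q ≤ t ^ (2 * q) := by
        have h3 : (t ^ 2 - x ^ 2) ^ q ≤ (t ^ 2) ^ q :=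
          Real.rpow_le_rpow (by nlinarith) (by nlinarith) h.le
        rwa [h2q] at h3
      have hnn1 : (0:ℝ) ≤ Real.exp (-t ^ 2) * (t ^ 2 - x ^ 2) ^ q :=
        mul_nonneg (Real.exp_pos _).le (Real.rpow_nonneg (by nlinarith) q)
      have hnn2 : (0:ℝ) ≤ t ^ (2 * q) * Real.exp (-1 * t ^ 2) :=
        mul_nonneg (Real.rpow_nonneg htpos.le _) (Real.exp_pos _).le
      rw [Real.norm_eq_abs, Real.norm_eq_abs, abs_of_nonneg hnn1, abs_of_nonneg hnn2]
      calc Real.exp (-t ^ 2) * (t ^ 2 - x ^ 2) ^ q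
          ≤ Real.exp (-t ^ 2) * t ^ (2 * q) :=
            mul_le_mul_of_nonneg_left hb (Real.exp_pos _).le
        _ = t ^ (2 * q) * Real.exp (-1 * t ^ 2) := by rw [neg_one_mul]; ring

/-- the change of variables `s = t² - x²` -/
lemma change_of_var {q : ℝ} (hq : -1 < q) {x : ℝ} (hx : 0 < x) :
    (∫ t in Ioi x, Real.exp (-t ^ 2) * (t ^ 2 - x ^ 2) ^ q)
      = Real.exp (-x ^ 2) / 2 *
        ∫ s in Ioi 0, Real.exp (-s) * s ^ q * (x ^ 2 + s) ^ (-(1/2) : ℝ) := by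
  set G : ℝ → ℝ := fun s =>
    Real.exp (-(x ^ 2 + s)) * s ^ q * (x ^ 2 + s) ^ (-(1/2) : ℝ) / 2 with hG
  set f : ℝ → ℝ := fun t => t ^ 2 - x ^ 2 with hf
  have himg1 : f '' Ioi x ⊆ Ioi 0 := by
    rintro s ⟨t, ht, rfl⟩
    have : x < t := ht
    simp only [hf, mem_Ioi]
    nlinarith
  have himg2 : f '' Ici x ⊆ Ici 0 := by
    rintro s ⟨t, ht, rfl⟩
    have : x ≤ t := ht
    simp only [hf, mem_Ici]
    nlinarith
  have hGcont : ContinuousOn G (Ioi 0) := by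
    apply ContinuousOn.div_const
    apply ContinuousOn.mul
    · apply ContinuousOn.mul
      · fun_prop
      · apply ContinuousOn.rpow_const continuousOn_id
        intro s hs
        exact Or.inl (ne_of_gt hs)
    · apply ContinuousOn.rpow_const (by fun_prop)
      intro s hs
      have : (0:ℝ) < s := hs
      left; positivity
  have hGint : IntegrableOn G (Ici 0) := by
    rw [integrableOn_Ici_iff_integrableOn_Ioi]
    have h1 : IntegrableOn
        (fun s : ℝ => Real.exp (-s) * s ^ q * (x ^ 2 + s) ^ (-(1/2):ℝ)) (Ioi 0) :=
      integrable_aux hq hx (by norm_num)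
    have h2 := (h1.const_mul (Real.exp (-x ^ 2) / 2))
    apply IntegrableOn.congr_fun h2 _ measurableSet_Ioi
    intro s hs
    simp only [hG]
    rw [neg_add, Real.exp_add]
    ring
  have hfderiv : ∀ t ∈ Ioi x, HasDerivWithinAt f (2 * t) (Ioi t) t := by
    intro t ht
    have h := ((hasDerivAt_pow 2 t).sub_const (x ^ 2)).hasDerivWithinAt
      (s := Ioi t)
    simpa [hf] using h
  have hcomp : ∀ t ∈ Ici x, (G ∘ f) t * (2 * t)
      = Real.exp (-t ^ 2) * (t ^ 2 - x ^ 2) ^ q := by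
    intro t ht
    have htx : x ≤ t := ht
    have htpos : 0 < t := lt_of_lt_of_le hx htx
    have htne : t ≠ 0 := ne_of_gt htpos
    have h1 : x ^ 2 + (t ^ 2 - x ^ 2) = t ^ 2 := by ring
    have h2 : ((t : ℝ) ^ 2) ^ (-(1/2) : ℝ) = t⁻¹ := by
      rw [← Real.rpow_natCast t 2, ← Real.rpow_mul htpos.le,
        (by norm_num : ((2:ℕ):ℝ) * (-(1/2)) = -1), Real.rpow_neg_one]
    show Real.exp (-(x ^ 2 + (t ^ 2 - x ^ 2))) * (t ^ 2 - x ^ 2) ^ q *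
        (x ^ 2 + (t ^ 2 - x ^ 2)) ^ (-(1/2) : ℝ) / 2 * (2 * t)
      = Real.exp (-t ^ 2) * (t ^ 2 - x ^ 2) ^ q
    rw [h1, h2]
    field_simp
    try exact Or.inl (by ring)
  have key := integral_comp_mul_deriv_Ioi (f := f) (f' := fun t => 2 * t) (g := G)
    (a := x) (by fun_prop) ?_ hfderiv (hGcont.mono himg1) (hGint.mono_set himg2) ?_
  · have hfx : f x = 0 := by simp [hf]
    rw [hfx] at key
    have hL : (∫ t in Ioi x, (G ∘ f) t * (2 * t))
        = ∫ t in Ioi x, Real.exp (-t ^ 2) * (t ^ 2 - x ^ 2) ^ q := by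
      apply setIntegral_congr_fun measurableSet_Ioi
      intro t ht
      exact hcomp t (Ioi_subset_Ici_self ht)
    rw [hL] at key
    rw [key]
    have hR : ∀ s ∈ Ioi (0:ℝ), G s
        = Real.exp (-x ^ 2) / 2 * (Real.exp (-s) * s ^ q * (x ^ 2 + s) ^ (-(1/2) : ℝ)) := by
      intro s hs
      simp only [hG]
      rw [neg_add, Real.exp_add]
      ring
    rw [setIntegral_congr_fun measurableSet_Ioi hR, integral_const_mul]
  · -- tendsto atTop
    have h := Filter.tendsto_atTop_add_const_right Filter.atTop (-x ^ 2)
      (Filter.tendsto_pow_atTop (two_ne_zero))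
    simpa [hf, sub_eq_add_neg] using h
  · -- integrability of the composed function
    apply (integrableOn_orig hq hx).congr_fun _ measurableSet_Ici
    intro t ht
    exact (hcomp t ht).symm

lemma meas_aux' {q : ℝ} (x r : ℝ) :
    Measurable (fun s : ℝ => Real.exp (-s) * s ^ q * (-x * (x ^ 2 + s) ^ r)) := by
  fun_prop

/-- the transformed potential -/
noncomputable def F (q x : ℝ) : ℝ :=
  ∫ s in Ioi 0, Real.exp (-s) * s ^ q * (x ^ 2 + s) ^ (-(1/2) : ℝ)

lemma V_eq {q : ℝ} (hq : -1 < q) {x : ℝ} (hx : 0 < x) :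
    V q x = (1 / Real.Gamma (q + 1)) * F q x := by
  rw [V, change_of_var hq hx, F]
  rw [show (-x ^ 2 : ℝ) = -(x ^ 2) by ring, Real.exp_neg]
  have h := (Real.exp_pos (x ^ 2)).ne'
  field_simp

lemma hasDerivAt_F {q : ℝ} (hq : -1 < q) {x : ℝ} (hx : 0 < x) :
    HasDerivAt (F q)
      (∫ s in Ioi 0, Real.exp (-s) * s ^ q * (-x * (x ^ 2 + s) ^ (-(3/2) : ℝ))) x := by
  have hball : ∀ y ∈ Metric.ball x (x / 2), x / 2 < y ∧ y < 3 * x / 2 := by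
    intro y hy
    rw [Metric.mem_ball, Real.dist_eq, abs_lt] at hy
    constructor <;> linarith [hy.1, hy.2]
  have key := hasDerivAt_integral_of_dominated_loc_of_deriv_le
    (μ := volume.restrict (Ioi 0)) (x₀ := x)
    (F := fun y s => Real.exp (-s) * s ^ q * (y ^ 2 + s) ^ (-(1/2) : ℝ))
    (F' := fun y s => Real.exp (-s) * s ^ q * (-y * (y ^ 2 + s) ^ (-(3/2) : ℝ)))
    (bound := fun s => (3 * x / 2 * (x ^ 2 / 4) ^ (-(3/2) : ℝ)) * (Real.exp (-s) * s ^ q))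
    (s := Metric.ball x (x / 2)) (Metric.ball_mem_nhds x (by positivity))
    (Filter.Eventually.of_forall fun y => (meas_aux y _).aestronglyMeasurable)
    (integrable_aux hq hx (by norm_num))
    ((meas_aux' x _).aestronglyMeasurable)
    ?_ (((integrableOn_gamma hq).const_mul _)) ?_
  · exact key.2
  · -- the bound
    filter_upwards [ae_restrict_mem measurableSet_Ioi] with s hs
    intro y hy
    obtain ⟨hy1, hy2⟩ := hball y hy
    have hs0 : (0:ℝ) < s := hs
    have hypos : 0 < y := lt_trans (by positivity) hy1
    have h1 : (0:ℝ) < x ^ 2 / 4 := by positivity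
    have h2 : x ^ 2 / 4 ≤ y ^ 2 + s := by nlinarith
    have h3 : (y ^ 2 + s) ^ (-(3/2) : ℝ) ≤ (x ^ 2 / 4) ^ (-(3/2) : ℝ) :=
      Real.rpow_le_rpow_of_nonpos h1 h2 (by norm_num)
    have hnn : (0:ℝ) ≤ Real.exp (-s) * s ^ q := by positivity
    have hA : (0:ℝ) ≤ (y ^ 2 + s) ^ (-(3/2) : ℝ) := Real.rpow_nonneg (by positivity) _
    rw [Real.norm_eq_abs, abs_mul, abs_mul, abs_mul, abs_neg,
      abs_of_nonneg (Real.exp_pos _).le, abs_of_nonneg (Real.rpow_nonneg hs0.le _),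
      abs_of_nonneg hypos.le, abs_of_nonneg hA]
    calc Real.exp (-s) * s ^ q * (y * (y ^ 2 + s) ^ (-(3/2) : ℝ))
        ≤ Real.exp (-s) * s ^ q * (3 * x / 2 * (x ^ 2 / 4) ^ (-(3/2) : ℝ)) := by
          apply mul_le_mul_of_nonneg_left _ hnn
          exact mul_le_mul hy2.le h3 hA (by positivity)
      _ = 3 * x / 2 * (x ^ 2 / 4) ^ (-(3/2) : ℝ) * (Real.exp (-s) * s ^ q) := by ring
  · -- differentiability
    filter_upwards [ae_restrict_mem measurableSet_Ioi] with s hs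
    intro y hy
    obtain ⟨hy1, hy2⟩ := hball y hy
    have hs0 : (0:ℝ) < s := hs
    have hypos : 0 < y := lt_trans (by positivity) hy1
    have hpos : (0:ℝ) < y ^ 2 + s := by positivity
    have h1 : HasDerivAt (fun z : ℝ => z ^ 2 + s) (2 * y) y := by
      simpa using ((hasDerivAt_pow 2 y).add_const s)
    have h2 := h1.rpow_const (p := (-(1/2) : ℝ)) (Or.inl hpos.ne')
    have h3 := h2.const_mul (Real.exp (-s) * s ^ q)
    refine h3.congr_deriv ?_
    rw [show (-(1/2) : ℝ) - 1 = -(3/2) by norm_num]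
    ring

lemma deriv_V {q : ℝ} (hq : -1 < q) {x : ℝ} (hx : 0 < x) :
    deriv (V q) x = (1 / Real.Gamma (q + 1)) *
      ∫ s in Ioi 0, Real.exp (-s) * s ^ q * (-x * (x ^ 2 + s) ^ (-(3/2) : ℝ)) := by
  have h1 : HasDerivAt (fun y => (1 / Real.Gamma (q + 1)) * F q y)
      ((1 / Real.Gamma (q + 1)) *
        ∫ s in Ioi 0, Real.exp (-s) * s ^ q * (-x * (x ^ 2 + s) ^ (-(3/2) : ℝ))) x :=
    (hasDerivAt_F hq hx).const_mul _
  have heq : V q =ᶠ[nhds x] fun y => (1 / Real.Gamma (q + 1)) * F q y := by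
    filter_upwards [Ioi_mem_nhds hx] with y hy
    exact V_eq hq hy
  rw [heq.deriv_eq]
  exact h1.deriv

/-- the function whose strict monotonicity drives everything -/
noncomputable def J (q x : ℝ) : ℝ :=
  ∫ s in Ioi 0, Real.exp (-s) * s ^ q * (x ^ 3 * (x ^ 2 + s) ^ (-(3/2) : ℝ))

lemma integrable_J {q : ℝ} (hq : -1 < q) {x : ℝ} (hx : 0 < x) :
    IntegrableOn
      (fun s : ℝ => Real.exp (-s) * s ^ q * (x ^ 3 * (x ^ 2 + s) ^ (-(3/2) : ℝ)))
      (Ioi 0) := by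
  have h := (integrable_aux hq hx (show (-(3/2) : ℝ) ≤ 0 by norm_num)).const_mul (x ^ 3)
  apply IntegrableOn.congr_fun h _ measurableSet_Ioi
  intro s _
  ring

lemma sq_mul_deriv {q : ℝ} (hq : -1 < q) {x : ℝ} (hx : 0 < x) :
    x ^ 2 * deriv (V q) x = -(1 / Real.Gamma (q + 1)) * J q x := by
  rw [deriv_V hq hx, J]
  rw [show x ^ 2 * ((1 / Real.Gamma (q + 1)) *
      ∫ s in Ioi 0, Real.exp (-s) * s ^ q * (-x * (x ^ 2 + s) ^ (-(3/2) : ℝ)))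
    = (1 / Real.Gamma (q + 1)) *
      (x ^ 2 * ∫ s in Ioi 0, Real.exp (-s) * s ^ q * (-x * (x ^ 2 + s) ^ (-(3/2) : ℝ)))
    from by ring]
  rw [← integral_const_mul (x ^ 2)]
  have : ∀ s ∈ Ioi (0:ℝ),
      x ^ 2 * (Real.exp (-s) * s ^ q * (-x * (x ^ 2 + s) ^ (-(3/2) : ℝ)))
      = -(Real.exp (-s) * s ^ q * (x ^ 3 * (x ^ 2 + s) ^ (-(3/2) : ℝ))) := by
    intro s _
    ring
  rw [setIntegral_congr_fun measurableSet_Ioi this, integral_neg]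
  ring

lemma J_strict {q : ℝ} (hq : -1 < q) {a b : ℝ} (ha : 0 < a) (hb : 0 < b) (hab : a < b) :
    J q a < J q b := by
  have key : ∀ s ∈ Ioi (0:ℝ),
      a ^ 3 * (a ^ 2 + s) ^ (-(3/2) : ℝ) < b ^ 3 * (b ^ 2 + s) ^ (-(3/2) : ℝ) := by
    intro s hs
    have hs0 : (0:ℝ) < s := hs
    have cube : ∀ c : ℝ, 0 < c →
        c ^ 3 * (c ^ 2 + s) ^ (-(3/2) : ℝ) = (c ^ 2 / (c ^ 2 + s)) ^ ((3:ℝ)/2) := by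
      intro c hc
      have hden : (0:ℝ) < c ^ 2 + s := by positivity
      rw [Real.div_rpow (by positivity) hden.le,
        show (-(3/2) : ℝ) = -(3/2) from rfl,
        Real.rpow_neg hden.le]
      have h1 : ((c ^ 2 : ℝ)) ^ ((3:ℝ)/2) = c ^ 3 := by
        rw [← Real.rpow_natCast c 2, ← Real.rpow_mul hc.le,
          show ((2:ℕ):ℝ) * (3/2) = ((3:ℕ):ℝ) by norm_num, Real.rpow_natCast]
      rw [h1]
      exact (div_eq_mul_inv _ _).symm
    rw [cube a ha, cube b hb]
    apply Real.rpow_lt_rpow (by positivity) _ (by norm_num)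
    rw [div_lt_div_iff₀ (by positivity) (by positivity)]
    have hsq : a ^ 2 < b ^ 2 := by nlinarith [mul_pos (sub_pos.2 hab) (show (0:ℝ) < a + b by linarith)]
    have h2 : a ^ 2 * s < b ^ 2 * s := mul_lt_mul_of_pos_right hsq hs0
    nlinarith [h2]
  have hint_a := integrable_J hq ha
  have hint_b := integrable_J hq hb
  have hsub : 0 < ∫ s in Ioi (0:ℝ),
      (Real.exp (-s) * s ^ q * (b ^ 3 * (b ^ 2 + s) ^ (-(3/2) : ℝ))
        - Real.exp (-s) * s ^ q * (a ^ 3 * (a ^ 2 + s) ^ (-(3/2) : ℝ))) := by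
    have hnonneg : 0 ≤ᵐ[volume.restrict (Ioi (0:ℝ))] fun s =>
        Real.exp (-s) * s ^ q * (b ^ 3 * (b ^ 2 + s) ^ (-(3/2) : ℝ))
          - Real.exp (-s) * s ^ q * (a ^ 3 * (a ^ 2 + s) ^ (-(3/2) : ℝ)) := by
      filter_upwards [ae_restrict_mem measurableSet_Ioi] with s hs
      have hs0 : (0:ℝ) < s := hs
      have hpos : 0 < Real.exp (-s) * s ^ q :=
        mul_pos (Real.exp_pos _) (Real.rpow_pos_of_pos hs0 q)
      simpa using
        sub_nonneg.2 (mul_le_mul_of_nonneg_left (key s hs).le hpos.le)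
    rw [setIntegral_pos_iff_support_of_nonneg_ae hnonneg (hint_b.sub hint_a)]
    have hsubset : Ioi (0:ℝ) ⊆
        (Function.support fun s =>
          Real.exp (-s) * s ^ q * (b ^ 3 * (b ^ 2 + s) ^ (-(3/2) : ℝ))
            - Real.exp (-s) * s ^ q * (a ^ 3 * (a ^ 2 + s) ^ (-(3/2) : ℝ))) ∩ Ioi 0 := by
      intro s hs
      refine ⟨?_, hs⟩
      have hs0 : (0:ℝ) < s := hs
      have hpos : 0 < Real.exp (-s) * s ^ q :=
        mul_pos (Real.exp_pos _) (Real.rpow_pos_of_pos hs0 q)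
      simp only [Function.mem_support]
      exact ne_of_gt (sub_pos.2 (mul_lt_mul_of_pos_left (key s hs) hpos))
    calc (0 : ENNReal) < ⊤ := by simp
      _ = volume (Ioi (0:ℝ)) := Real.volume_Ioi.symm
      _ ≤ _ := measure_mono hsubset
  have := hsub
  rw [integral_sub hint_b hint_a] at this
  unfold J
  linarith

end CoulombAux

theorem stmt_1 (q : ℝ) (hq : -1 < q) :
    StrictAntiOn (fun x => x ^ 2 * deriv (V q) x) (Set.Ioi (0 : ℝ)) := by
  intro a ha b hb hab
  have ha' : (0:ℝ) < a := ha
  have hb' : (0:ℝ) < b := hb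
  simp only
  rw [CoulombAux.sq_mul_deriv hq ha', CoulombAux.sq_mul_deriv hq hb']
  have hΓ : 0 < Real.Gamma (q + 1) := Real.Gamma_pos_of_pos (by linarith)
  have hJ := CoulombAux.J_strict hq ha' hb' hab
  have h1 : 0 < 1 / Real.Gamma (q + 1) := by positivity
  nlinarith
end

section
/- For every fixed q ≥ 0, the function x ↦ V_q'(x)/x is strictly increasing on (0,∞). -/
open Real MeasureTheory Set

lemma aux_meas (q p c : ℝ) :
    Measurable (fun u : ℝ => Real.exp (-u) * u ^ q * (c + u) ^ p) := by
  fun_prop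

lemma aux_int (q : ℝ) (hq : 0 ≤ q) {x p : ℝ} (hx : 0 < x) (hp : p < 0) :
    IntegrableOn (fun u => Real.exp (-u) * u ^ q * (x ^ 2 + u) ^ p) (Set.Ioi (0:ℝ)) := by
  have hG : IntegrableOn (fun u : ℝ => Real.exp (-u) * u ^ q) (Set.Ioi 0) := by
    have := Real.GammaIntegral_convergent (show (0:ℝ) < q + 1 by linarith)
    simpa using this
  have hG' := hG.const_mul ((x ^ 2) ^ p)
  refine Integrable.mono hG' ((aux_meas q p (x ^ 2)).aestronglyMeasurable.restrict) ?_
  filter_upwards [ae_restrict_mem measurableSet_Ioi] with u hu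
  have hu0 : (0:ℝ) < u := hu
  have h1 : (x ^ 2 + u) ^ p ≤ (x ^ 2) ^ p :=
    le_of_lt (Real.rpow_lt_rpow_of_neg (by positivity) (by linarith) hp)
  have hb : (0:ℝ) ≤ Real.exp (-u) * u ^ q := by positivity
  rw [Real.norm_eq_abs, Real.norm_eq_abs]
  rw [abs_of_nonneg (by positivity), abs_of_nonneg (by positivity)]
  calc Real.exp (-u) * u ^ q * (x ^ 2 + u) ^ p
      ≤ Real.exp (-u) * u ^ q * (x ^ 2) ^ p := mul_le_mul_of_nonneg_left h1 hb
    _ = (x ^ 2) ^ p * (Real.exp (-u) * u ^ q) := by ring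

lemma aux_image {x : ℝ} (hx : 0 < x) :
    (fun u : ℝ => Real.sqrt (x ^ 2 + u)) '' Set.Ioi 0 = Set.Ioi x := by
  ext y
  constructor
  · rintro ⟨u, hu, rfl⟩
    have hu0 : (0:ℝ) < u := hu
    have : Real.sqrt (x ^ 2) < Real.sqrt (x ^ 2 + u) :=
      Real.sqrt_lt_sqrt (by positivity) (by linarith)
    rwa [Real.sqrt_sq hx.le] at this
  · intro hy
    have hxy : x < y := hy
    refine ⟨y ^ 2 - x ^ 2, by simp [Set.mem_Ioi]; nlinarith, ?_⟩
    show Real.sqrt (x ^ 2 + (y ^ 2 - x ^ 2)) = y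
    rw [show x ^ 2 + (y ^ 2 - x ^ 2) = y ^ 2 by ring, Real.sqrt_sq (by linarith)]

lemma aux_cov (q : ℝ) {x : ℝ} (hx : 0 < x) :
    (∫ t in Set.Ioi x, Real.exp (-t ^ 2) * (t ^ 2 - x ^ 2) ^ q) =
      ∫ u in Set.Ioi (0:ℝ),
        (1 / (2 * Real.sqrt (x ^ 2 + u))) * (Real.exp (-(x ^ 2 + u)) * u ^ q) := by
  have hpos : ∀ u ∈ Set.Ioi (0:ℝ), (0:ℝ) < x ^ 2 + u := fun u hu => by
    have : (0:ℝ) < u := hu; positivity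
  have hderiv : ∀ u ∈ Set.Ioi (0:ℝ),
      HasDerivWithinAt (fun u : ℝ => Real.sqrt (x ^ 2 + u))
        (1 / (2 * Real.sqrt (x ^ 2 + u))) (Set.Ioi 0) u := by
    intro u hu
    have h1 : HasDerivAt (fun u : ℝ => x ^ 2 + u) 1 u := by
      simpa using (hasDerivAt_id u).const_add (x ^ 2)
    have h2 := (Real.hasDerivAt_sqrt (hpos u hu).ne').comp u h1
    have h3 : HasDerivAt (fun u : ℝ => Real.sqrt (x ^ 2 + u)) (1 / (2 * Real.sqrt (x ^ 2 + u))) u := by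
      exact h2.congr_deriv (by ring)
    exact h3.hasDerivWithinAt
  have hinj : Set.InjOn (fun u : ℝ => Real.sqrt (x ^ 2 + u)) (Set.Ioi 0) := by
    intro a ha b hb h
    have ha' := hpos a ha
    have hb' := hpos b hb
    have := congrArg (fun y : ℝ => y ^ 2) h
    simp only [Real.sq_sqrt ha'.le, Real.sq_sqrt hb'.le] at this
    linarith
  have := MeasureTheory.integral_image_eq_integral_abs_deriv_smul measurableSet_Ioi hderiv hinj
    (fun t => Real.exp (-t ^ 2) * (t ^ 2 - x ^ 2) ^ q)
  rw [aux_image hx] at this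
  rw [this]
  refine setIntegral_congr_fun measurableSet_Ioi ?_
  intro u hu
  have h0 := hpos u hu
  have hsq : Real.sqrt (x ^ 2 + u) ^ 2 = x ^ 2 + u := Real.sq_sqrt h0.le
  simp only [smul_eq_mul, hsq]
  rw [abs_of_pos (by positivity)]
  ring_nf

lemma V_eq_s2 (q : ℝ) {x : ℝ} (hx : 0 < x) :
    V q x = (1 / Real.Gamma (q + 1)) *
      ∫ u in Set.Ioi (0:ℝ), Real.exp (-u) * u ^ q * (x ^ 2 + u) ^ (-(1/2) : ℝ) := by
  rw [V, aux_cov q hx]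
  rw [show (∫ u in Set.Ioi (0:ℝ), Real.exp (-u) * u ^ q * (x ^ 2 + u) ^ (-(1/2) : ℝ))
      = ∫ u in Set.Ioi (0:ℝ), (2 * Real.exp (x ^ 2)) *
        ((1 / (2 * Real.sqrt (x ^ 2 + u))) * (Real.exp (-(x ^ 2 + u)) * u ^ q)) from ?_]
  · rw [MeasureTheory.integral_const_mul]; ring
  refine setIntegral_congr_fun measurableSet_Ioi fun u hu => ?_
  have hu0 : (0:ℝ) < u := hu
  have h0 : (0:ℝ) < x ^ 2 + u := by positivity
  have hs : Real.sqrt (x ^ 2 + u) ≠ 0 := by positivity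
  rw [Real.rpow_neg h0.le, ← Real.sqrt_eq_rpow, Real.exp_neg (x ^ 2 + u), Real.exp_neg u,
    Real.exp_add]
  field_simp

lemma aux_deriv (q : ℝ) (hq : 0 ≤ q) {x : ℝ} (hx : 0 < x) :
    HasDerivAt
      (fun y : ℝ => ∫ u in Set.Ioi (0:ℝ), Real.exp (-u) * u ^ q * (y ^ 2 + u) ^ (-(1/2) : ℝ))
      (∫ u in Set.Ioi (0:ℝ), Real.exp (-u) * u ^ q * (-x * (x ^ 2 + u) ^ (-(3/2) : ℝ))) x := by
  set F : ℝ → ℝ → ℝ := fun y u => Real.exp (-u) * u ^ q * (y ^ 2 + u) ^ (-(1/2) : ℝ) with hF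
  set F' : ℝ → ℝ → ℝ :=
    fun y u => Real.exp (-u) * u ^ q * (-y * (y ^ 2 + u) ^ (-(3/2) : ℝ)) with hF'
  set bound : ℝ → ℝ := fun u =>
    (3 * x / 2) * ((x / 2) ^ 2) ^ (-(3/2) : ℝ) * (Real.exp (-u) * u ^ q) with hbnd
  have key := hasDerivAt_integral_of_dominated_loc_of_deriv_le (μ := volume.restrict (Set.Ioi 0))
    (F := F) (F' := F') (x₀ := x) (bound := bound) (Metric.ball_mem_nhds x (half_pos hx))
    (Filter.Eventually.of_forall fun y => (aux_meas q _ _).aestronglyMeasurable.restrict)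
    (aux_int q hq hx (by norm_num))
    ?_ ?_ ?_ ?_
  · exact key.2
  · have : Measurable (F' x) := by
      have := aux_meas q (-(3/2) : ℝ) (x ^ 2)
      fun_prop
    exact this.aestronglyMeasurable.restrict
  · rw [MeasureTheory.ae_restrict_iff' measurableSet_Ioi]
    refine Filter.Eventually.of_forall fun u hu => ?_
    intro y hy
    have hu0 : (0:ℝ) < u := hu
    rw [Metric.mem_ball, Real.dist_eq, abs_lt] at hy
    have hy1 : x / 2 < y := by linarith
    have hy2 : y < 3 * x / 2 := by linarith
    have hy0 : 0 < y := lt_trans (by positivity) hy1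
    have hrp : ((y:ℝ) ^ 2 + u) ^ (-(3/2) : ℝ) ≤ ((x / 2) ^ 2) ^ (-(3/2) : ℝ) :=
      le_of_lt (Real.rpow_lt_rpow_of_neg (by positivity) (by nlinarith) (by norm_num))
    have hrp0 : (0:ℝ) < (y ^ 2 + u) ^ (-(3/2) : ℝ) := Real.rpow_pos_of_pos (by positivity) _
    have : ‖F' y u‖ = Real.exp (-u) * u ^ q * (y * (y ^ 2 + u) ^ (-(3/2) : ℝ)) := by
      rw [hF']
      simp only []
      rw [Real.norm_eq_abs, show Real.exp (-u) * u ^ q * (-y * (y ^ 2 + u) ^ (-(3/2) : ℝ))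
        = -(Real.exp (-u) * u ^ q * (y * (y ^ 2 + u) ^ (-(3/2) : ℝ))) by ring, abs_neg,
        abs_of_nonneg (by positivity)]
    rw [this, hbnd]
    have h1 : y * (y ^ 2 + u) ^ (-(3/2) : ℝ) ≤ (3 * x / 2) * ((x / 2) ^ 2) ^ (-(3/2) : ℝ) :=
      mul_le_mul hy2.le hrp hrp0.le (by positivity)
    calc Real.exp (-u) * u ^ q * (y * (y ^ 2 + u) ^ (-(3/2) : ℝ))
        ≤ Real.exp (-u) * u ^ q * ((3 * x / 2) * ((x / 2) ^ 2) ^ (-(3/2) : ℝ)) :=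
          mul_le_mul_of_nonneg_left h1 (by positivity)
      _ = (3 * x / 2) * ((x / 2) ^ 2) ^ (-(3/2) : ℝ) * (Real.exp (-u) * u ^ q) := by ring
  · have hG : IntegrableOn (fun u : ℝ => Real.exp (-u) * u ^ q) (Set.Ioi 0) := by
      have := Real.GammaIntegral_convergent (show (0:ℝ) < q + 1 by linarith)
      simpa using this
    exact hG.const_mul _
  · rw [MeasureTheory.ae_restrict_iff' measurableSet_Ioi]
    refine Filter.Eventually.of_forall fun u hu => ?_
    intro y hy
    have hu0 : (0:ℝ) < u := hu
    rw [Metric.mem_ball, Real.dist_eq, abs_lt] at hy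
    have hy0 : 0 < y := by linarith
    have hpos : (0:ℝ) < y ^ 2 + u := by positivity
    have h1 : HasDerivAt (fun y : ℝ => y ^ 2 + u) (2 * y) y := by
      simpa using ((hasDerivAt_pow 2 y).add_const u)
    have h2 := h1.rpow_const (p := (-(1/2) : ℝ)) (Or.inl hpos.ne')
    have h3 := h2.const_mul (Real.exp (-u) * u ^ q)
    refine h3.congr_deriv ?_
    rw [show (-(1/2) : ℝ) - 1 = -(3/2) by norm_num]
    ring

lemma aux_strict (q : ℝ) (hq : 0 ≤ q) {x y : ℝ} (hx : 0 < x) (hxy : x < y) :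
    (∫ u in Set.Ioi (0:ℝ), Real.exp (-u) * u ^ q * (y ^ 2 + u) ^ (-(3/2) : ℝ)) <
      ∫ u in Set.Ioi (0:ℝ), Real.exp (-u) * u ^ q * (x ^ 2 + u) ^ (-(3/2) : ℝ) := by
  have hy : 0 < y := hx.trans hxy
  have hix := aux_int q hq (x := x) (p := (-(3/2) : ℝ)) hx (by norm_num)
  have hiy := aux_int q hq (x := y) (p := (-(3/2) : ℝ)) hy (by norm_num)
  have hsub : (0:ℝ) < ∫ u in Set.Ioi (0:ℝ),
      (Real.exp (-u) * u ^ q * (x ^ 2 + u) ^ (-(3/2) : ℝ)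
        - Real.exp (-u) * u ^ q * (y ^ 2 + u) ^ (-(3/2) : ℝ)) := by
    set g : ℝ → ℝ := fun u => Real.exp (-u) * u ^ q * (x ^ 2 + u) ^ (-(3/2) : ℝ)
      - Real.exp (-u) * u ^ q * (y ^ 2 + u) ^ (-(3/2) : ℝ) with hg
    have hgpos : ∀ u ∈ Set.Ioi (0:ℝ), 0 < g u := by
      intro u hu
      have hu0 : (0:ℝ) < u := hu
      have h1 : (y ^ 2 + u) ^ (-(3/2) : ℝ) < (x ^ 2 + u) ^ (-(3/2) : ℝ) :=
        Real.rpow_lt_rpow_of_neg (by positivity) (by nlinarith) (by norm_num)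
      have h2 : (0:ℝ) < Real.exp (-u) * u ^ q := by positivity
      rw [hg]; simp only []
      nlinarith
    rw [setIntegral_pos_iff_support_of_nonneg_ae]
    · refine lt_of_lt_of_le ?_ (measure_mono (s := Set.Ioi (0:ℝ)) ?_)
      · rw [Real.volume_Ioi]; exact ENNReal.zero_lt_top
      · intro u hu
        exact ⟨(hgpos u hu).ne', hu⟩
    · filter_upwards [ae_restrict_mem measurableSet_Ioi] with u hu
      exact (hgpos u hu).le
    · exact hix.sub hiy
  have := MeasureTheory.integral_sub hix hiy
  rw [this] at hsub
  linarith

lemma deriv_V_eq (q : ℝ) (hq : 0 ≤ q) {x : ℝ} (hx : 0 < x) :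
    deriv (V q) x = (1 / Real.Gamma (q + 1)) *
      (-x * ∫ u in Set.Ioi (0:ℝ), Real.exp (-u) * u ^ q * (x ^ 2 + u) ^ (-(3/2) : ℝ)) := by
  have hev : V q =ᶠ[nhds x] (fun y => (1 / Real.Gamma (q + 1)) *
      ∫ u in Set.Ioi (0:ℝ), Real.exp (-u) * u ^ q * (y ^ 2 + u) ^ (-(1/2) : ℝ)) := by
    filter_upwards [isOpen_Ioi.mem_nhds hx] with y hy
    exact V_eq_s2 q hy
  rw [Filter.EventuallyEq.deriv_eq hev]
  have h := (aux_deriv q hq hx).const_mul (1 / Real.Gamma (q + 1))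
  rw [h.deriv]
  congr 1
  rw [show (∫ u in Set.Ioi (0:ℝ), Real.exp (-u) * u ^ q * (-x * (x ^ 2 + u) ^ (-(3/2) : ℝ)))
      = ∫ u in Set.Ioi (0:ℝ), (-x) * (Real.exp (-u) * u ^ q * (x ^ 2 + u) ^ (-(3/2) : ℝ)) from
    setIntegral_congr_fun measurableSet_Ioi fun u _ => by ring,
    MeasureTheory.integral_const_mul]

theorem stmt_2 (q : ℝ) (hq : 0 ≤ q) :
    StrictMonoOn (fun x => deriv (V q) x / x) (Set.Ioi (0 : ℝ)) := by
  have hG : 0 < Real.Gamma (q + 1) := Real.Gamma_pos_of_pos (by linarith)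
  intro x hx y hy hxy
  have hx0 : (0:ℝ) < x := hx
  have hy0 : (0:ℝ) < y := hy
  simp only [deriv_V_eq q hq hx0, deriv_V_eq q hq hy0]
  have hrw : ∀ z J : ℝ, z ≠ 0 →
      (1 / Real.Gamma (q + 1)) * (-z * J) / z = -(J / Real.Gamma (q + 1)) := by
    intro z J hz
    field_simp
  rw [hrw x _ hx0.ne', hrw y _ hy0.ne']
  have hJ := aux_strict q hq hx0 hxy
  have : (∫ u in Set.Ioi (0:ℝ), Real.exp (-u) * u ^ q * (y ^ 2 + u) ^ (-(3/2) : ℝ))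
        / Real.Gamma (q + 1)
      < (∫ u in Set.Ioi (0:ℝ), Real.exp (-u) * u ^ q * (x ^ 2 + u) ^ (-(3/2) : ℝ))
        / Real.Gamma (q + 1) := by gcongr
  linarith
end

section
/- For every q ≥ 0 and all x, y > 0 with x ≠ y, one has V_q(√((x² + y²)/2)) < √(V_q(x)·V_q(y)); equality in the non-strict version holds if and only if x = y. -/
open Real MeasureTheory Set
open scoped ENNReal

lemma pointwise_amgm {a b : ℝ} (ha : 0 < a) (hb : 0 < b) (hab : a ≠ b) :
    ((a + b) / 2) ^ (-(1/2) : ℝ) < a ^ (-(1/4) : ℝ) * b ^ (-(1/4) : ℝ) := by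
  have hne : Real.sqrt a ≠ Real.sqrt b := by
    intro h
    have := congrArg (fun r : ℝ => r ^ 2) h
    simp only [Real.sq_sqrt ha.le, Real.sq_sqrt hb.le] at this
    exact hab this
  have hpos : 0 < (Real.sqrt a - Real.sqrt b) ^ 2 := sq_pos_of_ne_zero (sub_ne_zero.mpr hne)
  have hsab : Real.sqrt (a * b) = Real.sqrt a * Real.sqrt b := Real.sqrt_mul ha.le b
  have hlt : Real.sqrt (a * b) < (a + b) / 2 := by
    nlinarith [Real.sq_sqrt ha.le, Real.sq_sqrt hb.le]
  have hsp : 0 < Real.sqrt (a * b) := Real.sqrt_pos.mpr (by positivity)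
  have h2 : ((a + b) / 2) ^ (-(1/2) : ℝ) < (Real.sqrt (a * b)) ^ (-(1/2) : ℝ) :=
    Real.rpow_lt_rpow_of_neg hsp hlt (by norm_num)
  have h3 : (Real.sqrt (a * b)) ^ (-(1/2) : ℝ) = a ^ (-(1/4) : ℝ) * b ^ (-(1/4) : ℝ) := by
    rw [Real.sqrt_eq_rpow, ← Real.rpow_mul (by positivity)]
    norm_num
    rw [Real.mul_rpow ha.le hb.le]
  rw [h3] at h2
  exact h2

lemma contOn_aux {q a b u v : ℝ} :
    ContinuousOn (fun s : ℝ => Real.exp (-s) * s ^ q * ((u + s) ^ a * (v + s) ^ b)) {s : ℝ | 0 < u + s ∧ 0 < v + s ∧ 0 < s} := by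
  intro s hs
  obtain ⟨h1, h2, h3⟩ := hs
  apply ContinuousAt.continuousWithinAt
  have c1 : ContinuousAt (fun s : ℝ => Real.exp (-s)) s := by fun_prop
  have c2 : ContinuousAt (fun s : ℝ => s ^ q) s :=
    Real.continuousAt_rpow_const s q (Or.inl h3.ne')
  have c3 : ContinuousAt (fun s : ℝ => (u + s) ^ a) s :=
    (Real.continuousAt_rpow_const (u + s) a (Or.inl h1.ne')).comp
      (by fun_prop : ContinuousAt (fun s : ℝ => u + s) s)
  have c4 : ContinuousAt (fun s : ℝ => (v + s) ^ b) s :=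
    (Real.continuousAt_rpow_const (v + s) b (Or.inl h2.ne')).comp
      (by fun_prop : ContinuousAt (fun s : ℝ => v + s) s)
  exact (c1.mul c2).mul (c3.mul c4)

lemma integrable_aux_s4 {q : ℝ} (hq : 0 ≤ q) {u v a b : ℝ} (hu : 0 < u) (hv : 0 < v)
    (ha : a ≤ 0) (hb : b ≤ 0) :
    IntegrableOn (fun s : ℝ => Real.exp (-s) * s ^ q * ((u + s) ^ a * (v + s) ^ b)) (Ioi 0) := by
  have hGamma : IntegrableOn (fun s : ℝ => Real.exp (-s) * s ^ q) (Ioi 0) := by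
    have := Real.GammaIntegral_convergent (show (0:ℝ) < q + 1 by linarith)
    simpa using this
  have hbound : IntegrableOn (fun s : ℝ => u ^ a * v ^ b * (Real.exp (-s) * s ^ q)) (Ioi 0) :=
    hGamma.const_mul _
  refine Integrable.mono' hbound ?_ ?_
  · refine ContinuousOn.aestronglyMeasurable ?_ measurableSet_Ioi
    exact contOn_aux.mono (fun s hs => ⟨by simp at hs; linarith [hs], by simp at hs; linarith [hs], hs⟩)
  · filter_upwards [ae_restrict_mem measurableSet_Ioi] with s hs
    have hs0 : (0:ℝ) < s := hs
    have h1 : (u + s) ^ a ≤ u ^ a := Real.rpow_le_rpow_of_nonpos hu (by linarith) ha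
    have h2 : (v + s) ^ b ≤ v ^ b := Real.rpow_le_rpow_of_nonpos hv (by linarith) hb
    have hnn : 0 ≤ Real.exp (-s) * s ^ q * ((u + s) ^ a * (v + s) ^ b) := by positivity
    rw [Real.norm_of_nonneg hnn]
    have hmul : (u + s) ^ a * (v + s) ^ b ≤ u ^ a * v ^ b :=
      mul_le_mul h1 h2 (Real.rpow_nonneg (by linarith) _) (Real.rpow_nonneg hu.le _)
    calc Real.exp (-s) * s ^ q * ((u + s) ^ a * (v + s) ^ b)
        ≤ Real.exp (-s) * s ^ q * (u ^ a * v ^ b) := by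
          apply mul_le_mul_of_nonneg_left hmul; positivity
      _ = u ^ a * v ^ b * (Real.exp (-s) * s ^ q) := by ring

lemma integrable_J {q : ℝ} (hq : 0 ≤ q) {u : ℝ} (hu : 0 < u) :
    IntegrableOn (fun s : ℝ => Real.exp (-s) * s ^ q * (u + s) ^ (-(1/2) : ℝ)) (Ioi 0) := by
  have := integrable_aux_s4 hq hu hu (show -(1/2:ℝ) ≤ 0 by norm_num) (le_refl (0:ℝ))
  simpa using this

lemma J_nonneg {q u : ℝ} (hu : 0 < u) :
    0 ≤ ∫ s in Ioi (0:ℝ), Real.exp (-s) * s ^ q * (u + s) ^ (-(1/2) : ℝ) := by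
  refine setIntegral_nonneg measurableSet_Ioi (fun s hs => ?_)
  have hs0 : (0:ℝ) < s := hs
  positivity

lemma key {q : ℝ} (hq : 0 ≤ q) {u v : ℝ} (hu : 0 < u) (hv : 0 < v) (huv : u ≠ v) :
    (∫ s in Ioi (0:ℝ), Real.exp (-s) * s ^ q * ((u + v) / 2 + s) ^ (-(1/2) : ℝ)) <
      Real.sqrt ((∫ s in Ioi (0:ℝ), Real.exp (-s) * s ^ q * (u + s) ^ (-(1/2) : ℝ)) *
        (∫ s in Ioi (0:ℝ), Real.exp (-s) * s ^ q * (v + s) ^ (-(1/2) : ℝ))) := by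
  have hm : 0 < (u + v) / 2 := by linarith
  set C : ℝ → ℝ := fun s => Real.exp (-s) * s ^ q * ((u + s) ^ (-(1/4) : ℝ) * (v + s) ^ (-(1/4) : ℝ)) with hC
  set M : ℝ → ℝ := fun s => Real.exp (-s) * s ^ q * ((u + v) / 2 + s) ^ (-(1/2) : ℝ) with hM
  have hC_int : IntegrableOn C (Ioi 0) :=
    integrable_aux_s4 hq hu hv (by norm_num) (by norm_num)
  have hM_int : IntegrableOn M (Ioi 0) := integrable_J hq hm
  -- Step A : strict comparison
  have hlt : ∀ s ∈ Ioi (0:ℝ), M s < C s := by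
    intro s hs
    have hs0 : (0:ℝ) < s := hs
    have hcore : ((u + s + (v + s)) / 2) ^ (-(1/2) : ℝ) <
        (u + s) ^ (-(1/4) : ℝ) * (v + s) ^ (-(1/4) : ℝ) :=
      pointwise_amgm (by linarith) (by linarith) (by intro h; apply huv; linarith)
    have harg : (u + v) / 2 + s = (u + s + (v + s)) / 2 := by ring
    have hfac : 0 < Real.exp (-s) * s ^ q := by positivity
    simp only [hM, hC, harg]
    exact mul_lt_mul_of_pos_left hcore hfac
  have hstep1 : (∫ s in Ioi (0:ℝ), M s) < ∫ s in Ioi (0:ℝ), C s := by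
    have hDint : IntegrableOn (fun s => C s - M s) (Ioi (0:ℝ)) := hC_int.sub hM_int
    have hae : 0 ≤ᵐ[volume.restrict (Ioi (0:ℝ))] fun s => C s - M s := by
      filter_upwards [ae_restrict_mem measurableSet_Ioi] with s hs
      exact (sub_pos.mpr (hlt s hs)).le
    have hsub : 0 < ∫ s in Ioi (0:ℝ), (C s - M s) := by
      rw [setIntegral_pos_iff_support_of_nonneg_ae hae hDint]
      have hss : Ioi (0:ℝ) ⊆ Function.support (fun s => C s - M s) ∩ Ioi 0 :=
        fun s hs => ⟨ne_of_gt (sub_pos.mpr (hlt s hs)), hs⟩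
      calc (0:ℝ≥0∞) < volume (Ioi (0:ℝ)) := by simp [Real.volume_Ioi]
        _ ≤ volume (Function.support (fun s => C s - M s) ∩ Ioi 0) := measure_mono hss
    rw [integral_sub hC_int hM_int] at hsub
    linarith
  -- Step B : Cauchy-Schwarz
  set f : ℝ → ℝ := fun s => Real.exp (-s/2) * s ^ (q/2) * (u + s) ^ (-(1/4) : ℝ) with hf
  set g : ℝ → ℝ := fun s => Real.exp (-s/2) * s ^ (q/2) * (v + s) ^ (-(1/4) : ℝ) with hg
  have hrpow2 : ∀ t : ℝ, t ^ (2:ℝ) = t ^ 2 := fun t => by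
    rw [show (2:ℝ) = ((2:ℕ):ℝ) by norm_num, Real.rpow_natCast]
  have hsqf : ∀ w : ℝ, 0 < w → ∀ s ∈ Ioi (0:ℝ),
      (Real.exp (-s/2) * s ^ (q/2) * (w + s) ^ (-(1/4) : ℝ)) ^ 2
        = Real.exp (-s) * s ^ q * (w + s) ^ (-(1/2) : ℝ) := by
    intro w hw s hs
    have hs0 : (0:ℝ) < s := hs
    have hA : (0:ℝ) < w + s := by linarith
    rw [mul_pow, mul_pow, sq (Real.exp (-s/2)), ← Real.exp_add,
      sq (s ^ (q/2)), ← Real.rpow_add hs0, sq ((w + s) ^ (-(1/4):ℝ)), ← Real.rpow_add hA]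
    norm_num
  have hcross : ∀ s ∈ Ioi (0:ℝ), f s * g s = C s := by
    intro s hs
    have hs0 : (0:ℝ) < s := hs
    simp only [hf, hg, hC]
    rw [show Real.exp (-s/2) * s ^ (q/2) * (u + s) ^ (-(1/4) : ℝ) *
        (Real.exp (-s/2) * s ^ (q/2) * (v + s) ^ (-(1/4) : ℝ))
      = (Real.exp (-s/2) * Real.exp (-s/2)) * (s ^ (q/2) * s ^ (q/2)) *
        ((u + s) ^ (-(1/4) : ℝ) * (v + s) ^ (-(1/4) : ℝ)) by ring,
      ← Real.exp_add, ← Real.rpow_add hs0]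
    norm_num
  have hconj : Real.HolderConjugate 2 2 := ⟨by norm_num, by norm_num, by norm_num⟩
  have haesm : ∀ w : ℝ, 0 < w → AEStronglyMeasurable
      (fun s : ℝ => Real.exp (-s/2) * s ^ (q/2) * (w + s) ^ (-(1/4) : ℝ))
      (volume.restrict (Ioi 0)) := by
    intro w hw
    refine ContinuousOn.aestronglyMeasurable ?_ measurableSet_Ioi
    intro s hs
    have hs0 : (0:ℝ) < s := hs
    apply ContinuousAt.continuousWithinAt
    have c1 : ContinuousAt (fun s : ℝ => Real.exp (-s/2)) s := by fun_prop
    have c2 : ContinuousAt (fun s : ℝ => s ^ (q/2)) s :=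
      Real.continuousAt_rpow_const s (q/2) (Or.inl hs0.ne')
    have c3 : ContinuousAt (fun s : ℝ => (w + s) ^ (-(1/4) : ℝ)) s :=
      (Real.continuousAt_rpow_const (w + s) _ (Or.inl (by linarith : w + s ≠ 0))).comp
        (by fun_prop : ContinuousAt (fun s : ℝ => w + s) s)
    exact (c1.mul c2).mul c3
  have hmem : ∀ w : ℝ, 0 < w → MemLp
      (fun s : ℝ => Real.exp (-s/2) * s ^ (q/2) * (w + s) ^ (-(1/4) : ℝ))
      (ENNReal.ofReal 2) (volume.restrict (Ioi 0)) := by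
    intro w hw
    rw [show ENNReal.ofReal (2:ℝ) = 2 by norm_num [ENNReal.ofReal_ofNat]]
    rw [memLp_two_iff_integrable_sq (haesm w hw)]
    refine (integrable_J hq hw).congr ?_
    filter_upwards [ae_restrict_mem measurableSet_Ioi] with s hs
    exact (hsqf w hw s hs).symm
  have hnonneg : ∀ w : ℝ, 0 < w → 0 ≤ᵐ[volume.restrict (Ioi (0:ℝ))]
      (fun s : ℝ => Real.exp (-s/2) * s ^ (q/2) * (w + s) ^ (-(1/4) : ℝ)) := by
    intro w hw
    filter_upwards [ae_restrict_mem measurableSet_Ioi] with s hs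
    have hs0 : (0:ℝ) < s := hs
    positivity
  have hCS := MeasureTheory.integral_mul_le_Lp_mul_Lq_of_nonneg hconj
    (hnonneg u hu) (hnonneg v hv) (hmem u hu) (hmem v hv)
  have hfg : (∫ s in Ioi (0:ℝ), f s * g s) = ∫ s in Ioi (0:ℝ), C s :=
    setIntegral_congr_fun measurableSet_Ioi hcross
  have hint_f : (∫ s in Ioi (0:ℝ), f s ^ (2:ℝ))
      = ∫ s in Ioi (0:ℝ), Real.exp (-s) * s ^ q * (u + s) ^ (-(1/2) : ℝ) := by
    refine setIntegral_congr_fun measurableSet_Ioi (fun s hs => ?_)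
    rw [hrpow2]; exact hsqf u hu s hs
  have hint_g : (∫ s in Ioi (0:ℝ), g s ^ (2:ℝ))
      = ∫ s in Ioi (0:ℝ), Real.exp (-s) * s ^ q * (v + s) ^ (-(1/2) : ℝ) := by
    refine setIntegral_congr_fun measurableSet_Ioi (fun s hs => ?_)
    rw [hrpow2]; exact hsqf v hv s hs
  rw [hfg, hint_f, hint_g] at hCS
  have hs2 : Real.sqrt ((∫ s in Ioi (0:ℝ), Real.exp (-s) * s ^ q * (u + s) ^ (-(1/2) : ℝ)) *
        (∫ s in Ioi (0:ℝ), Real.exp (-s) * s ^ q * (v + s) ^ (-(1/2) : ℝ)))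
      = (∫ s in Ioi (0:ℝ), Real.exp (-s) * s ^ q * (u + s) ^ (-(1/2) : ℝ)) ^ (1/2 : ℝ) *
        (∫ s in Ioi (0:ℝ), Real.exp (-s) * s ^ q * (v + s) ^ (-(1/2) : ℝ)) ^ (1/2 : ℝ) := by
    rw [Real.sqrt_mul (J_nonneg hu), Real.sqrt_eq_rpow, Real.sqrt_eq_rpow]
  rw [hs2]
  exact lt_of_lt_of_le hstep1 hCS


lemma rep (q : ℝ) {x : ℝ} (hx : 0 < x) :
    V q x = (1 / Real.Gamma (q + 1)) *
      ∫ s in Ioi (0:ℝ), Real.exp (-s) * s ^ q * (x ^ 2 + s) ^ (-(1/2) : ℝ) := by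
  have himg : (fun s : ℝ => Real.sqrt (x ^ 2 + s)) '' Ioi 0 = Ioi x := by
    ext t
    constructor
    · rintro ⟨s, hs, rfl⟩
      have hs0 : (0:ℝ) < s := hs
      have : Real.sqrt (x ^ 2) < Real.sqrt (x ^ 2 + s) :=
        Real.sqrt_lt_sqrt (sq_nonneg x) (by linarith)
      rwa [Real.sqrt_sq hx.le] at this
    · intro ht
      have ht' : x < t := ht
      have ht0 : 0 < t := hx.trans ht'
      refine ⟨t ^ 2 - x ^ 2, by simp; nlinarith, ?_⟩
      show Real.sqrt (x ^ 2 + (t ^ 2 - x ^ 2)) = t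
      rw [show x ^ 2 + (t ^ 2 - x ^ 2) = t ^ 2 by ring, Real.sqrt_sq ht0.le]
  have hderiv : ∀ s ∈ Ioi (0:ℝ), HasDerivWithinAt (fun s : ℝ => Real.sqrt (x ^ 2 + s))
      (1 / (2 * Real.sqrt (x ^ 2 + s))) (Ioi 0) s := by
    intro s hs
    have hs0 : (0:ℝ) < s := hs
    have h1 : HasDerivAt (fun s : ℝ => x ^ 2 + s) 1 s := by
      simpa using (hasDerivAt_id s).const_add (x ^ 2)
    have h2 : HasDerivAt Real.sqrt (1 / (2 * Real.sqrt (x ^ 2 + s))) (x ^ 2 + s) :=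
      Real.hasDerivAt_sqrt (by positivity)
    have h3 := (h2.comp s h1).hasDerivWithinAt (s := Ioi 0)
    rw [mul_one] at h3
    exact h3
  have hinj : InjOn (fun s : ℝ => Real.sqrt (x ^ 2 + s)) (Ioi 0) := by
    intro a ha b hb hab
    have ha0 : (0:ℝ) < a := ha
    have hb0 : (0:ℝ) < b := hb
    have := congrArg (fun r : ℝ => r ^ 2) hab
    simp only [Real.sq_sqrt (by positivity : (0:ℝ) ≤ x ^ 2 + a),
      Real.sq_sqrt (by positivity : (0:ℝ) ≤ x ^ 2 + b)] at this
    linarith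
  have hcv := integral_image_eq_integral_abs_deriv_smul measurableSet_Ioi hderiv hinj
      (fun t => Real.exp (-t ^ 2) * (t ^ 2 - x ^ 2) ^ q)
  rw [himg] at hcv
  have heq : ∀ s ∈ Ioi (0:ℝ),
      |1 / (2 * Real.sqrt (x ^ 2 + s))| •
        (Real.exp (-(Real.sqrt (x ^ 2 + s)) ^ 2) * ((Real.sqrt (x ^ 2 + s)) ^ 2 - x ^ 2) ^ q)
      = (Real.exp (-x ^ 2) / 2) * (Real.exp (-s) * s ^ q * (x ^ 2 + s) ^ (-(1/2) : ℝ)) := by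
    intro s hs
    have hs0 : (0:ℝ) < s := hs
    have hA : (0:ℝ) < x ^ 2 + s := by positivity
    rw [Real.sq_sqrt hA.le]
    have hsqrt : (0:ℝ) < Real.sqrt (x ^ 2 + s) := Real.sqrt_pos.mpr hA
    rw [abs_of_nonneg (by positivity), smul_eq_mul]
    have hrpow : (x ^ 2 + s) ^ (-(1/2) : ℝ) = (Real.sqrt (x ^ 2 + s))⁻¹ := by
      rw [Real.rpow_neg hA.le, Real.sqrt_eq_rpow]
    rw [hrpow, show x ^ 2 + s - x ^ 2 = s by ring, show -(x ^ 2 + s) = -x ^ 2 + -s by ring,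
      Real.exp_add]
    field_simp
  unfold V
  rw [hcv, setIntegral_congr_fun measurableSet_Ioi heq, MeasureTheory.integral_const_mul]
  have hexp : 2 * Real.exp (x ^ 2) * (Real.exp (-x ^ 2) / 2) = 1 := by
    rw [show 2 * Real.exp (x ^ 2) * (Real.exp (-x ^ 2) / 2)
        = Real.exp (x ^ 2) * Real.exp (-x ^ 2) by ring, ← Real.exp_add]
    simp
  linear_combination (∫ s in Ioi (0:ℝ), Real.exp (-s) * s ^ q * (x ^ 2 + s) ^ (-(1/2) : ℝ)) /
    Real.Gamma (q + 1) * hexp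

theorem stmt_4 (q : ℝ) (hq : 0 ≤ q) (x y : ℝ) (hx : 0 < x) (hy : 0 < y) :
    (x ≠ y → V q (Real.sqrt ((x ^ 2 + y ^ 2) / 2)) < Real.sqrt (V q x * V q y)) ∧
    (V q (Real.sqrt ((x ^ 2 + y ^ 2) / 2)) = Real.sqrt (V q x * V q y) ↔ x = y) := by
  have hΓ : 0 < Real.Gamma (q + 1) := Real.Gamma_pos_of_pos (by linarith)
  have hm : 0 < (x ^ 2 + y ^ 2) / 2 := by positivity
  have hsm : 0 < Real.sqrt ((x ^ 2 + y ^ 2) / 2) := Real.sqrt_pos.mpr hm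
  have hVm : V q (Real.sqrt ((x ^ 2 + y ^ 2) / 2)) = (1 / Real.Gamma (q + 1)) *
      ∫ s in Ioi (0:ℝ), Real.exp (-s) * s ^ q * ((x ^ 2 + y ^ 2) / 2 + s) ^ (-(1/2) : ℝ) := by
    rw [rep q hsm, Real.sq_sqrt hm.le]
  have hVx := rep q hx
  have hVy := rep q hy
  have hu : (0:ℝ) < x ^ 2 := by positivity
  have hv : (0:ℝ) < y ^ 2 := by positivity
  have hstrict : x ≠ y →
      V q (Real.sqrt ((x ^ 2 + y ^ 2) / 2)) < Real.sqrt (V q x * V q y) := by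
    intro hxy
    have huv : x ^ 2 ≠ y ^ 2 := fun h => hxy (by
      rw [← Real.sqrt_sq hx.le, ← Real.sqrt_sq hy.le, h])
    have hk := key hq hu hv huv
    rw [hVm, hVx, hVy]
    rw [show (1 / Real.Gamma (q + 1)) *
          (∫ s in Ioi (0:ℝ), Real.exp (-s) * s ^ q * (x ^ 2 + s) ^ (-(1/2) : ℝ)) *
        ((1 / Real.Gamma (q + 1)) *
          (∫ s in Ioi (0:ℝ), Real.exp (-s) * s ^ q * (y ^ 2 + s) ^ (-(1/2) : ℝ)))
      = (1 / Real.Gamma (q + 1)) ^ 2 *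
        ((∫ s in Ioi (0:ℝ), Real.exp (-s) * s ^ q * (x ^ 2 + s) ^ (-(1/2) : ℝ)) *
          (∫ s in Ioi (0:ℝ), Real.exp (-s) * s ^ q * (y ^ 2 + s) ^ (-(1/2) : ℝ))) by ring,
      Real.sqrt_mul (sq_nonneg _), Real.sqrt_sq (by positivity : (0:ℝ) ≤ 1 / Real.Gamma (q + 1))]
    exact mul_lt_mul_of_pos_left hk (by positivity)
  refine ⟨hstrict, ⟨fun heq => ?_, fun heq => ?_⟩⟩
  · by_contra hne
    exact absurd heq (ne_of_lt (hstrict hne))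
  · subst heq
    rw [show (x ^ 2 + x ^ 2) / 2 = x ^ 2 by ring, Real.sqrt_sq hx.le]
    have hVnn : 0 ≤ V q x := by
      rw [rep q hx]
      exact mul_nonneg (by positivity) (J_nonneg hu)
    rw [Real.sqrt_mul_self hVnn]
end

section
/- For every q > -1 and all x, y > 0 with x ≠ y, one has √(V_q(x)·V_q(y)) < V_q(√(xy)); that is, V_q is strictly geometrically (multiplicatively) concave on (0,∞). -/
open Real MeasureTheory Set

namespace Stmt5

open Filter Topology Metric

noncomputable def Mk (q k z : ℝ) : ℝ :=
  ∫ u in Ioi (0:ℝ), u ^ k * (Real.exp (-(z*u)) * (1+u) ^ (-(q+1)))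

lemma contOn_base {q a : ℝ} {z : ℝ} :
    ContinuousOn (fun u : ℝ => u ^ a * (Real.exp (-(z*u)) * (1+u) ^ (-(q+1)))) (Ioi 0) := by
  apply ContinuousOn.mul
  · exact fun u hu => (Real.continuousAt_rpow_const u a (Or.inl (ne_of_gt hu))).continuousWithinAt
  · apply ContinuousOn.mul
    · exact (Real.continuous_exp.comp (continuous_const.mul continuous_id).neg).continuousOn
    · intro u hu
      have h1 : (0:ℝ) < 1 + u := by have : (0:ℝ) < u := hu; linarith
      exact ((Real.continuousAt_rpow_const _ _ (Or.inl h1.ne')).comp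
        ((continuous_const.add continuous_id).continuousAt)).continuousWithinAt

lemma integrable_aux {q z a : ℝ} (hq : -1 < q) (hz : 0 < z) (ha : -1 < a) :
    IntegrableOn (fun u : ℝ => u ^ a * (Real.exp (-(z*u)) * (1+u) ^ (-(q+1)))) (Ioi 0) := by
  have h : IntegrableOn (fun u : ℝ => u ^ a * Real.exp (-z * u)) (Ioi 0) := by
    have := integrableOn_rpow_mul_exp_neg_mul_rpow ha zero_lt_one hz
    simpa [Real.rpow_one] using this
  apply h.mono'
  · exact contOn_base.aestronglyMeasurable measurableSet_Ioi
  · filter_upwards [self_mem_ae_restrict measurableSet_Ioi] with u hu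
    have h1 : (0:ℝ) < u := hu
    have h2 : (1+u) ^ (-(q+1)) ≤ 1 :=
      Real.rpow_le_one_of_one_le_of_nonpos (by linarith) (by linarith)
    have h3 : (0:ℝ) < (1+u) ^ (-(q+1)) := Real.rpow_pos_of_pos (by linarith) _
    rw [Real.norm_eq_abs, abs_of_nonneg (by positivity)]
    rw [neg_mul]
    nlinarith [Real.rpow_pos_of_pos h1 a, Real.exp_pos (-(z*u)),
      mul_le_of_le_one_right (Real.exp_pos (-(z*u))).le h2]

lemma gamma_int {a r : ℝ} (ha : 0 < a) (hr : 0 < r) :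
    ∫ t in Ioi (0:ℝ), t ^ (a-1) * Real.exp (-(r*t)) = r ^ (-a) * Real.Gamma a := by
  rw [Real.integral_rpow_mul_exp_neg_mul_Ioi ha hr, one_div, Real.inv_rpow hr.le,
    ← Real.rpow_neg hr.le]

lemma int_half {r : ℝ} (hr : 0 < r) :
    ∫ u in Ioi (0:ℝ), u ^ (-(1:ℝ)/2) * Real.exp (-(r*u))
      = Real.sqrt π * r ^ (-(1:ℝ)/2) := by
  have h := gamma_int (a := 1/2) (by norm_num) hr
  rw [show ((1:ℝ)/2 - 1) = -(1:ℝ)/2 by norm_num] at h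
  rw [h, show (-((1:ℝ)/2)) = -(1:ℝ)/2 by norm_num, Real.Gamma_one_half_eq, mul_comm]

lemma int_gammaq {q r : ℝ} (hq : -1 < q) (hr : 0 < r) :
    ∫ s in Ioi (0:ℝ), s ^ q * Real.exp (-(r*s)) = r ^ (-(q+1)) * Real.Gamma (q+1) := by
  have h := gamma_int (a := q+1) (by linarith) hr
  rw [show (q+1-1) = q by ring] at h
  exact h

lemma integrable_sq {q : ℝ} (hq : -1 < q) :
    IntegrableOn (fun s : ℝ => Real.exp (-s) * s ^ q) (Ioi 0) := by
  have := Real.GammaIntegral_convergent (by linarith : (0:ℝ) < q+1)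
  simpa using this

lemma integrable_uhalf {c : ℝ} (hc : 0 < c) :
    IntegrableOn (fun u : ℝ => u ^ (-(1:ℝ)/2) * Real.exp (-(c*u))) (Ioi 0) := by
  have := integrableOn_rpow_mul_exp_neg_mul_rpow (by norm_num : (-1:ℝ) < -(1:ℝ)/2) zero_lt_one hc
  simpa [Real.rpow_one, neg_mul] using this

lemma stepBC {q x : ℝ} (hq : -1 < q) (hx : 0 < x) :
    Real.sqrt π * ∫ s in Ioi (0:ℝ), Real.exp (-s) * s ^ q * (x^2+s) ^ (-(1:ℝ)/2)
      = Real.Gamma (q+1) * Mk q (-(1:ℝ)/2) (x^2) := by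
  set F : ℝ × ℝ → ℝ :=
    fun p => (Real.exp (-p.1) * p.1 ^ q) * (p.2 ^ (-(1:ℝ)/2) * Real.exp (-((x^2+p.1)*p.2)))
    with hF
  have hS : MeasurableSet ((Ioi (0:ℝ)) ×ˢ (Ioi (0:ℝ))) :=
    measurableSet_Ioi.prod measurableSet_Ioi
  -- integrability of F on the product
  have hFcont : ContinuousOn F ((Ioi (0:ℝ)) ×ˢ (Ioi (0:ℝ))) := by
    intro p hp
    have hp1 : (0:ℝ) < p.1 := hp.1
    have hp2 : (0:ℝ) < p.2 := hp.2
    apply ContinuousAt.continuousWithinAt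
    apply ContinuousAt.mul
    · exact ((Real.continuous_exp.comp continuous_fst.neg).continuousAt).mul
        ((Real.continuousAt_rpow_const _ q (Or.inl hp1.ne')).comp continuousAt_fst)
    · apply ContinuousAt.mul
      · exact (Real.continuousAt_rpow_const _ _ (Or.inl hp2.ne')).comp continuousAt_snd
      · exact (Real.continuous_exp.comp
          (((continuous_const.add continuous_fst).mul continuous_snd).neg)).continuousAt
  have hFint : Integrable (F) ((volume.restrict (Ioi 0)).prod (volume.restrict (Ioi 0))) := by
    have hG : Integrable (fun p : ℝ × ℝ =>
        (Real.exp (-p.1) * p.1 ^ q) * (p.2 ^ (-(1:ℝ)/2) * Real.exp (-(x^2*p.2))))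
        ((volume.restrict (Ioi 0)).prod (volume.restrict (Ioi 0))) :=
      Integrable.mul_prod (integrable_sq hq) (integrable_uhalf (by positivity))
    apply hG.mono'
    · rw [Measure.prod_restrict]
      exact hFcont.aestronglyMeasurable hS
    · rw [Measure.prod_restrict]
      filter_upwards [self_mem_ae_restrict hS] with p hp
      have hp1 : (0:ℝ) < p.1 := hp.1
      have hp2 : (0:ℝ) < p.2 := hp.2
      rw [hF, Real.norm_eq_abs, abs_of_nonneg (by positivity)]
      have h1 : Real.exp (-((x^2+p.1)*p.2)) ≤ Real.exp (-(x^2*p.2)) := by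
        apply Real.exp_le_exp.mpr; nlinarith
      have h2 : (0:ℝ) ≤ Real.exp (-p.1) * p.1 ^ q := by positivity
      have h3 : (0:ℝ) ≤ p.2 ^ (-(1:ℝ)/2) := by positivity
      nlinarith [Real.exp_pos (-((x^2+p.1)*p.2)), Real.rpow_pos_of_pos hp1 q,
        Real.exp_pos (-p.1), mul_le_mul_of_nonneg_left h1 h3]
  -- rewrite LHS as double integral
  have lhs_eq : Real.sqrt π * ∫ s in Ioi (0:ℝ), Real.exp (-s) * s ^ q * (x^2+s) ^ (-(1:ℝ)/2)
      = ∫ s in Ioi (0:ℝ), ∫ u in Ioi (0:ℝ), F (s, u) := by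
    rw [← integral_const_mul]
    apply setIntegral_congr_fun measurableSet_Ioi
    intro s hs
    have hs' : (0:ℝ) < s := hs
    have hxs : (0:ℝ) < x^2 + s := by positivity
    rw [hF]
    simp only
    rw [integral_const_mul, int_half hxs]
    ring
  have swap : ∫ s in Ioi (0:ℝ), ∫ u in Ioi (0:ℝ), F (s, u)
      = ∫ u in Ioi (0:ℝ), ∫ s in Ioi (0:ℝ), F (s, u) :=
    integral_integral_swap hFint
  -- compute the u-outer integral
  have rhs_eq : ∫ u in Ioi (0:ℝ), ∫ s in Ioi (0:ℝ), F (s, u)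
      = Real.Gamma (q+1) * Mk q (-(1:ℝ)/2) (x^2) := by
    rw [Mk, ← integral_const_mul]
    apply setIntegral_congr_fun measurableSet_Ioi
    intro u hu
    have hu' : (0:ℝ) < u := hu
    have h1u : (0:ℝ) < 1 + u := by linarith
    have : ∀ s ∈ Ioi (0:ℝ), F (s, u)
        = (u ^ (-(1:ℝ)/2) * Real.exp (-(x^2*u))) * (s ^ q * Real.exp (-((1+u)*s))) := by
      intro s hs
      rw [hF]
      simp only
      have he : Real.exp (-s) * Real.exp (-((x^2+s)*u))
          = Real.exp (-(x^2*u)) * Real.exp (-((1+u)*s)) := by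
        rw [← Real.exp_add, ← Real.exp_add]; congr 1; ring
      linear_combination (s ^ q * u ^ (-(1:ℝ)/2)) * he
    dsimp only
    rw [setIntegral_congr_fun measurableSet_Ioi this, integral_const_mul, int_gammaq hq h1u]
    ring
  rw [lhs_eq, swap, rhs_eq]

lemma stepA {q x : ℝ} (hx : 0 < x) :
    ∫ t in Ioi x, Real.exp (-t ^ 2) * (t ^ 2 - x ^ 2) ^ q
      = ∫ s in Ioi (0:ℝ), Real.exp (-(x^2+s)) * s ^ q * (x^2+s) ^ (-(1:ℝ)/2) / 2 := by
  have himg : (fun t : ℝ => t^2 - x^2) '' Ioi x = Ioi 0 := by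
    ext s
    constructor
    · rintro ⟨t, ht, rfl⟩
      have : x < t := ht
      have : 0 < t^2 - x^2 := by nlinarith
      simpa using this
    · intro hs
      have hs' : (0:ℝ) < s := hs
      refine ⟨Real.sqrt (x^2+s), ?_, ?_⟩
      · have h1 : x = Real.sqrt (x^2) := by rw [Real.sqrt_sq hx.le]
        have : Real.sqrt (x^2) < Real.sqrt (x^2+s) := by
          apply Real.sqrt_lt_sqrt (by positivity); linarith
        simpa [Set.mem_Ioi, ← h1] using this
      · show Real.sqrt (x^2+s) ^ 2 - x^2 = s
        rw [Real.sq_sqrt (by positivity)]; ring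
  have key := integral_image_eq_integral_abs_deriv_smul (f := fun t : ℝ => t^2 - x^2)
    (f' := fun t : ℝ => 2*t) (s := Ioi x) measurableSet_Ioi
    (fun t _ => by
      simpa using ((hasDerivAt_pow 2 t).sub_const (x^2)).hasDerivWithinAt)
    (fun a ha b hb hab => by
      have ha' : 0 < a := hx.trans ha
      have hb' : 0 < b := hx.trans hb
      have : a^2 = b^2 := by dsimp at hab; linarith
      nlinarith)
    (fun s => Real.exp (-(x^2+s)) * s ^ q * (x^2+s) ^ (-(1:ℝ)/2) / 2)
  rw [himg] at key
  rw [key]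
  apply setIntegral_congr_fun measurableSet_Ioi
  intro t ht
  have ht' : 0 < t := hx.trans ht
  have htx : (0:ℝ) < t^2 - x^2 := by have : x < t := ht; nlinarith
  have h1 : x^2 + (t^2 - x^2) = t^2 := by ring
  have h2 : (t^2 : ℝ) ^ (-(1:ℝ)/2) = t⁻¹ := by
    rw [show (t^2 : ℝ) = t ^ (2:ℝ) by rw [← Real.rpow_natCast t 2]; norm_num,
      ← Real.rpow_mul ht'.le]
    norm_num
    exact Real.rpow_neg_one t
  simp only [smul_eq_mul]
  rw [h1, h2, abs_of_pos (by linarith : (0:ℝ) < 2*t)]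
  field_simp

lemma ibp {q k z : ℝ} (hq : -1 < q) (hk : 0 < k) (hz : 0 < z) :
    k * Mk q (k-1) z = z * Mk q k z + (q+1) * Mk (q+1) k z := by
  set p := q + 1 with hp
  have hp0 : 0 < p := by rw [hp]; linarith
  set f : ℝ → ℝ := fun u => u ^ k * (Real.exp (-(z*u)) * (1+u) ^ (-p)) with hf
  set f' : ℝ → ℝ := fun u =>
      k * (u ^ (k-1) * (Real.exp (-(z*u)) * (1+u) ^ (-p)))
      - z * (u ^ k * (Real.exp (-(z*u)) * (1+u) ^ (-p)))
      - p * (u ^ k * (Real.exp (-(z*u)) * (1+u) ^ (-p-1))) with hf'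
  have hcont : ContinuousWithinAt f (Ici 0) 0 := by
    apply ContinuousAt.continuousWithinAt
    apply ContinuousAt.mul
    · exact Real.continuousAt_rpow_const 0 k (Or.inr hk.le)
    · apply ContinuousAt.mul
      · exact (Real.continuous_exp.comp (continuous_const.mul continuous_id).neg).continuousAt
      · exact (Real.continuousAt_rpow_const _ _ (Or.inl (by norm_num : (1:ℝ)+0 ≠ 0))).comp
          ((continuous_const.add continuous_id).continuousAt)
  have hderiv : ∀ u ∈ Ioi (0:ℝ), HasDerivAt f (f' u) u := by
    intro u hu
    have hu' : (0:ℝ) < u := hu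
    have h1u : (0:ℝ) < 1 + u := by linarith
    have d1 : HasDerivAt (fun u : ℝ => u ^ k) (k * u ^ (k-1)) u :=
      Real.hasDerivAt_rpow_const (Or.inl hu'.ne')
    have d2 : HasDerivAt (fun u : ℝ => Real.exp (-(z*u))) (-z * Real.exp (-(z*u))) u := by
      have : HasDerivAt (fun u : ℝ => -(z*u)) (-z) u := by
        simpa using ((hasDerivAt_id u).const_mul z).fun_neg
      simpa [mul_comm] using this.exp
    have d3 : HasDerivAt (fun u : ℝ => (1+u) ^ (-p)) (-p * (1+u) ^ (-p-1)) u := by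
      have dg : HasDerivAt (fun u : ℝ => 1 + u) 1 u := by
        simpa using (hasDerivAt_id u).const_add 1
      have := (Real.hasDerivAt_rpow_const (p := -p) (Or.inl h1u.ne')).comp u dg
      simpa [Function.comp_def] using this
    have := d1.fun_mul (d2.fun_mul d3)
    refine this.congr_deriv ?_
    rw [hf']
    ring
  have i1 : IntegrableOn (fun u : ℝ =>
      k * (u ^ (k-1) * (Real.exp (-(z*u)) * (1+u) ^ (-p)))) (Ioi 0) :=
    (integrable_aux hq hz (by linarith)).const_mul k
  have i2 : IntegrableOn (fun u : ℝ =>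
      z * (u ^ k * (Real.exp (-(z*u)) * (1+u) ^ (-p)))) (Ioi 0) :=
    (integrable_aux hq hz (by linarith)).const_mul z
  have heq3 : EqOn (fun u : ℝ => p * (u ^ k * (Real.exp (-(z*u)) * (1+u) ^ (-(q+1+1)))))
      (fun u : ℝ => p * (u ^ k * (Real.exp (-(z*u)) * (1+u) ^ (-p-1)))) (Ioi 0) := by
    intro u hu
    rw [show -(q+1+1) = -p-1 by rw [hp]; ring]
  have i3 : IntegrableOn (fun u : ℝ =>
      p * (u ^ k * (Real.exp (-(z*u)) * (1+u) ^ (-p-1)))) (Ioi 0) :=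
    IntegrableOn.congr_fun
      ((integrable_aux (q := q+1) (by linarith) hz (by linarith)).const_mul p)
      heq3 measurableSet_Ioi
  have f'int : IntegrableOn f' (Ioi 0) := by
    rw [hf']
    exact (i1.sub i2).sub i3
  have ftop : Tendsto f atTop (𝓝 0) := by
    have hb : Tendsto (fun u : ℝ => u ^ k * Real.exp (-z * u)) atTop (𝓝 0) :=
      tendsto_rpow_mul_exp_neg_mul_atTop_nhds_zero k z hz
    apply squeeze_zero' (g := fun u : ℝ => u ^ k * Real.exp (-z * u))
    · filter_upwards [eventually_gt_atTop (0:ℝ)] with u hu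
      have h1u : (0:ℝ) < 1 + u := by linarith
      positivity
    · filter_upwards [eventually_gt_atTop (0:ℝ)] with u hu
      have h1u : (0:ℝ) < 1 + u := by linarith
      show u ^ k * (Real.exp (-(z*u)) * (1+u) ^ (-p)) ≤ u ^ k * Real.exp (-z*u)
      have h2 : (1+u) ^ (-p) ≤ 1 :=
        Real.rpow_le_one_of_one_le_of_nonpos (by linarith) (by linarith)
      have h3 : (0:ℝ) < u ^ k := Real.rpow_pos_of_pos hu k
      have h4 : (0:ℝ) < Real.exp (-(z*u)) := Real.exp_pos _
      rw [neg_mul]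
      nlinarith [mul_le_of_le_one_right h4.le h2]
    · exact hb
  have key := integral_Ioi_of_hasDerivAt_of_tendsto hcont hderiv f'int ftop
  have hf0 : f 0 = 0 := by
    rw [hf]; simp [Real.zero_rpow hk.ne']
  rw [hf0, sub_zero] at key
  -- expand the integral of f'
  have e3 : ∫ u in Ioi (0:ℝ), p * (u ^ k * (Real.exp (-(z*u)) * (1+u) ^ (-p-1)))
      = p * Mk (q+1) k z := by
    rw [← setIntegral_congr_fun measurableSet_Ioi heq3, integral_const_mul, Mk]
  have expand : ∫ u in Ioi (0:ℝ), f' u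
      = k * Mk q (k-1) z - z * Mk q k z - p * Mk (q+1) k z := by
    have i12 : IntegrableOn (fun u : ℝ =>
        k * (u ^ (k-1) * (Real.exp (-(z*u)) * (1+u) ^ (-p)))
        - z * (u ^ k * (Real.exp (-(z*u)) * (1+u) ^ (-p)))) (Ioi 0) := i1.sub i2
    rw [hf', integral_sub i12 i3, integral_sub i1 i2, e3,
      integral_const_mul, integral_const_mul]
    simp only [Mk, hp]
  rw [expand, ← hp] at key
  linarith

lemma Mk_pos {q k z : ℝ} (hq : -1 < q) (hk : -1 < k) (hz : 0 < z) : 0 < Mk q k z := by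
  rw [Mk]
  have hnn : 0 ≤ᵐ[volume.restrict (Ioi (0:ℝ))]
      fun u : ℝ => u ^ k * (Real.exp (-(z*u)) * (1+u) ^ (-(q+1))) := by
    filter_upwards [self_mem_ae_restrict measurableSet_Ioi] with u hu
    have hu' : (0:ℝ) < u := hu
    have h1u : (0:ℝ) < 1 + u := by linarith
    positivity
  rw [integral_pos_iff_support_of_nonneg_ae hnn (integrable_aux hq hz hk)]
  have hsub : Ioi (0:ℝ) ⊆ Function.support
      fun u : ℝ => u ^ k * (Real.exp (-(z*u)) * (1+u) ^ (-(q+1))) := by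
    intro u hu
    have hu' : (0:ℝ) < u := hu
    have h1u : (0:ℝ) < 1 + u := by linarith
    have : (0:ℝ) < u ^ k * (Real.exp (-(z*u)) * (1+u) ^ (-(q+1))) := by positivity
    exact this.ne'
  refine lt_of_lt_of_le ?_ (measure_mono hsub)
  rw [Measure.restrict_apply_self]
  simp [Real.volume_Ioi]

lemma hasDerivAt_Mk {q k z : ℝ} (hq : -1 < q) (hk : -1 < k) (hz : 0 < z) :
    HasDerivAt (Mk q k) (-Mk q (k+1) z) z := by
  set F : ℝ → ℝ → ℝ :=
    fun x u => u ^ k * (Real.exp (-(x*u)) * (1+u) ^ (-(q+1))) with hF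
  set F' : ℝ → ℝ → ℝ :=
    fun x u => -(u ^ (k+1) * (Real.exp (-(x*u)) * (1+u) ^ (-(q+1)))) with hF'
  have key := hasDerivAt_integral_of_dominated_loc_of_deriv_le
    (μ := volume.restrict (Ioi (0:ℝ))) (x₀ := z) (F := F) (F' := F')
    (bound := fun u => u ^ (k+1) * (Real.exp (-(z/2*u)) * (1+u) ^ (-(q+1))))
    (ball_mem_nhds z (half_pos hz))
    (Eventually.of_forall fun x => contOn_base.aestronglyMeasurable measurableSet_Ioi)
    (integrable_aux hq hz hk)
    ((contOn_base.aestronglyMeasurable measurableSet_Ioi).neg)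
    ?_ (integrable_aux hq (half_pos hz) (by linarith)) ?_
  · have : ∫ u in Ioi (0:ℝ), F' z u = -Mk q (k+1) z := by
      rw [hF', Mk]
      simp only
      rw [integral_neg]
    rw [← this]
    exact key.2
  · filter_upwards [self_mem_ae_restrict measurableSet_Ioi] with u hu x hx
    have hu' : (0:ℝ) < u := hu
    have h1u : (0:ℝ) < 1 + u := by linarith
    have hx2 : z/2 < x := by
      rw [mem_ball, Real.dist_eq, abs_lt] at hx
      linarith [hx.1]
    rw [hF', Real.norm_eq_abs, abs_neg, abs_of_nonneg (by positivity)]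
    have hexp : Real.exp (-(x*u)) ≤ Real.exp (-(z/2*u)) := by
      apply Real.exp_le_exp.mpr
      nlinarith
    have h3 : (0:ℝ) ≤ u ^ (k+1) * (1+u) ^ (-(q+1)) := by positivity
    calc u ^ (k+1) * (Real.exp (-(x*u)) * (1+u) ^ (-(q+1)))
        = (u ^ (k+1) * (1+u) ^ (-(q+1))) * Real.exp (-(x*u)) := by ring
      _ ≤ (u ^ (k+1) * (1+u) ^ (-(q+1))) * Real.exp (-(z/2*u)) :=
          mul_le_mul_of_nonneg_left hexp h3
      _ = u ^ (k+1) * (Real.exp (-(z/2*u)) * (1+u) ^ (-(q+1))) := by ring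
  · filter_upwards [self_mem_ae_restrict measurableSet_Ioi] with u hu x hx
    have hu' : (0:ℝ) < u := hu
    have d2 : HasDerivAt (fun x : ℝ => Real.exp (-(x*u))) (-u * Real.exp (-(x*u))) x := by
      have : HasDerivAt (fun x : ℝ => -(x*u)) (-u) x := by
        simpa using ((hasDerivAt_id x).mul_const u).fun_neg
      simpa [mul_comm] using this.exp
    have := ((d2.mul_const ((1+u) ^ (-(q+1)))).const_mul (u ^ k))
    convert this using 1
    show -(u ^ (k+1) * (Real.exp (-(x*u)) * (1+u) ^ (-(q+1)))) = _
    rw [Real.rpow_add_one hu'.ne']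
    ring
    rfl

lemma cheb {q z : ℝ} (hq : -1 < q) (hz : 0 < z) :
    Mk (q+1) ((1:ℝ)/2) z * Mk q ((1:ℝ)/2) z
      < Mk (q+1) ((3:ℝ)/2) z * Mk q (-(1:ℝ)/2) z := by
  set w : ℝ → ℝ := fun u => u ^ (-(1:ℝ)/2) * (Real.exp (-(z*u)) * (1+u) ^ (-(q+1))) with hw
  set h : ℝ → ℝ := fun u => u / (1+u) with hh
  have hq1 : (-1:ℝ) < q + 1 := by linarith
  -- pointwise positivity of w
  have hw_pos : ∀ u : ℝ, u ∈ Ioi (0:ℝ) → 0 < w u := by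
    intro u hu
    have hu' : (0:ℝ) < u := hu
    have h1u : (0:ℝ) < 1 + u := by linarith
    rw [hw]; positivity
  -- pointwise identifications on Ioi 0
  have e1 : EqOn (fun u : ℝ => u * w u)
      (fun u : ℝ => u ^ ((1:ℝ)/2) * (Real.exp (-(z*u)) * (1+u) ^ (-(q+1)))) (Ioi 0) := by
    intro u hu
    have hu' : (0:ℝ) < u := hu
    simp only [hw]
    rw [show ((1:ℝ)/2) = -(1:ℝ)/2 + 1 by norm_num, Real.rpow_add_one hu'.ne']
    ring
  have e2 : EqOn (fun u : ℝ => h u * w u)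
      (fun u : ℝ => u ^ ((1:ℝ)/2) * (Real.exp (-(z*u)) * (1+u) ^ (-(q+1+1)))) (Ioi 0) := by
    intro u hu
    have hu' : (0:ℝ) < u := hu
    have h1u : (0:ℝ) < 1 + u := by linarith
    simp only [hw, hh]
    rw [show ((1:ℝ)/2) = -(1:ℝ)/2 + 1 by norm_num, Real.rpow_add_one hu'.ne',
      show -(q+1+1) = -(q+1) + (-1) by ring, Real.rpow_add h1u, Real.rpow_neg_one]
    field_simp
  have e3 : EqOn (fun u : ℝ => u * (h u * w u))
      (fun u : ℝ => u ^ ((3:ℝ)/2) * (Real.exp (-(z*u)) * (1+u) ^ (-(q+1+1)))) (Ioi 0) := by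
    intro u hu
    have hu' : (0:ℝ) < u := hu
    have h1u : (0:ℝ) < 1 + u := by linarith
    simp only [hw, hh]
    rw [show ((3:ℝ)/2) = -(1:ℝ)/2 + 1 + 1 by norm_num, Real.rpow_add_one (by positivity),
      Real.rpow_add_one hu'.ne',
      show -(q+1+1) = -(q+1) + (-1) by ring, Real.rpow_add h1u, Real.rpow_neg_one]
    field_simp
  -- integrability of the four component functions on Ioi 0
  have iW : IntegrableOn w (Ioi 0) := integrable_aux hq hz (by norm_num)
  have iUW : IntegrableOn (fun u : ℝ => u * w u) (Ioi 0) :=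
    (integrable_aux hq hz (by norm_num)).congr_fun e1.symm measurableSet_Ioi
  have iHW : IntegrableOn (fun u : ℝ => h u * w u) (Ioi 0) :=
    (integrable_aux hq1 hz (by norm_num)).congr_fun e2.symm measurableSet_Ioi
  have iUHW : IntegrableOn (fun u : ℝ => u * (h u * w u)) (Ioi 0) :=
    (integrable_aux hq1 hz (by norm_num)).congr_fun e3.symm measurableSet_Ioi
  -- identify the Mk's
  have m0 : Mk q (-(1:ℝ)/2) z = ∫ u in Ioi (0:ℝ), w u := rfl
  have m1 : Mk q ((1:ℝ)/2) z = ∫ u in Ioi (0:ℝ), u * w u :=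
    (setIntegral_congr_fun measurableSet_Ioi e1).symm
  have n0 : Mk (q+1) ((1:ℝ)/2) z = ∫ u in Ioi (0:ℝ), h u * w u :=
    (setIntegral_congr_fun measurableSet_Ioi e2).symm
  have n1 : Mk (q+1) ((3:ℝ)/2) z = ∫ u in Ioi (0:ℝ), u * (h u * w u) :=
    (setIntegral_congr_fun measurableSet_Ioi e3).symm
  -- the double integral
  set μ : Measure ℝ := volume.restrict (Ioi (0:ℝ)) with hμ
  set A : ℝ × ℝ → ℝ :=
    fun pr => ((pr.1 - pr.2) * (h pr.1 - h pr.2)) * (w pr.1 * w pr.2) with hA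
  have hAeq : A = fun pr : ℝ × ℝ =>
      (pr.1 * (h pr.1 * w pr.1)) * w pr.2 + w pr.1 * (pr.2 * (h pr.2 * w pr.2))
      - ((pr.1 * w pr.1) * (h pr.2 * w pr.2) + (h pr.1 * w pr.1) * (pr.2 * w pr.2)) := by
    funext pr
    rw [hA]
    ring
  have iT1 : Integrable (fun pr : ℝ × ℝ => (pr.1 * (h pr.1 * w pr.1)) * w pr.2) (μ.prod μ) :=
    iUHW.mul_prod iW
  have iT2 : Integrable (fun pr : ℝ × ℝ => w pr.1 * (pr.2 * (h pr.2 * w pr.2))) (μ.prod μ) :=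
    iW.mul_prod iUHW
  have iT3 : Integrable (fun pr : ℝ × ℝ => (pr.1 * w pr.1) * (h pr.2 * w pr.2)) (μ.prod μ) :=
    iUW.mul_prod iHW
  have iT4 : Integrable (fun pr : ℝ × ℝ => (h pr.1 * w pr.1) * (pr.2 * w pr.2)) (μ.prod μ) :=
    iHW.mul_prod iUW
  have iA : Integrable A (μ.prod μ) := by
    rw [hAeq]
    exact (iT1.add iT2).sub (iT3.add iT4)
  -- h is monotone on positives
  have hmono : ∀ a b : ℝ, 0 < a → 0 < b → a < b → h a < h b := by
    intro a b ha hb hab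
    rw [hh]
    rw [div_lt_div_iff₀ (by linarith) (by linarith)]
    nlinarith
  -- positivity of the double integral
  have hApos : 0 < ∫ pr, A pr ∂(μ.prod μ) := by
    have hnn : 0 ≤ᵐ[μ.prod μ] A := by
      rw [hμ, Measure.prod_restrict]
      filter_upwards [self_mem_ae_restrict (measurableSet_Ioi.prod measurableSet_Ioi)] with pr hpr
      have h1 : (0:ℝ) < pr.1 := hpr.1
      have h2 : (0:ℝ) < pr.2 := hpr.2
      rw [hA]
      apply mul_nonneg
      · rcases lt_trichotomy pr.1 pr.2 with hlt | heq | hgt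
        · nlinarith [hmono pr.1 pr.2 h1 h2 hlt]
        · rw [heq]; simp
        · have := hmono pr.2 pr.1 h2 h1 hgt
          apply mul_nonneg <;> linarith
      · exact mul_nonneg (hw_pos pr.1 h1).le (hw_pos pr.2 h2).le
    rw [integral_pos_iff_support_of_nonneg_ae hnn iA]
    have hsub : (Ioo (1:ℝ) 2) ×ˢ (Ioo (3:ℝ) 4) ⊆ Function.support A := by
      rintro ⟨a, b⟩ ⟨ha, hb⟩
      have ha1 : (1:ℝ) < a := ha.1
      have ha2 : a < 2 := ha.2
      have hb3 : (3:ℝ) < b := hb.1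
      have hb4 : b < 4 := hb.2
      have hab : a < b := by linarith
      have h1 : (0:ℝ) < a := by linarith
      have h2 : (0:ℝ) < b := by linarith
      have hm := hmono a b h1 h2 hab
      have : 0 < A (a, b) := by
        rw [hA]
        apply mul_pos
        · apply mul_pos_of_neg_of_neg <;> simp <;> linarith
        · exact mul_pos (hw_pos a h1) (hw_pos b h2)
      exact this.ne'
    refine lt_of_lt_of_le ?_ (measure_mono hsub)
    have c1 : Ioo (1:ℝ) 2 ∩ Ioi 0 = Ioo 1 2 :=
      inter_eq_left.mpr (fun x hx => lt_trans one_pos hx.1)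
    have c2 : Ioo (3:ℝ) 4 ∩ Ioi 0 = Ioo 3 4 :=
      inter_eq_left.mpr (fun x hx => lt_trans (by norm_num) hx.1)
    rw [Measure.prod_prod, hμ, Measure.restrict_apply measurableSet_Ioo,
      Measure.restrict_apply measurableSet_Ioo, c1, c2, Real.volume_Ioo, Real.volume_Ioo]
    norm_num
  -- expand the double integral
  have hexp : ∫ pr, A pr ∂(μ.prod μ)
      = 2 * ((∫ u in Ioi (0:ℝ), u * (h u * w u)) * (∫ u in Ioi (0:ℝ), w u)
          - (∫ u in Ioi (0:ℝ), u * w u) * (∫ u in Ioi (0:ℝ), h u * w u)) := by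
    have i12 : Integrable (fun pr : ℝ × ℝ =>
        (pr.1 * (h pr.1 * w pr.1)) * w pr.2 + w pr.1 * (pr.2 * (h pr.2 * w pr.2)))
        (μ.prod μ) := iT1.add iT2
    have i34 : Integrable (fun pr : ℝ × ℝ =>
        (pr.1 * w pr.1) * (h pr.2 * w pr.2) + (h pr.1 * w pr.1) * (pr.2 * w pr.2))
        (μ.prod μ) := iT3.add iT4
    have t1 : ∫ pr : ℝ × ℝ, (pr.1 * (h pr.1 * w pr.1)) * w pr.2 ∂(μ.prod μ)
        = (∫ u, u * (h u * w u) ∂μ) * (∫ u, w u ∂μ) :=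
      integral_prod_mul (fun a : ℝ => a * (h a * w a)) w
    have t2 : ∫ pr : ℝ × ℝ, w pr.1 * (pr.2 * (h pr.2 * w pr.2)) ∂(μ.prod μ)
        = (∫ u, w u ∂μ) * (∫ u, u * (h u * w u) ∂μ) :=
      integral_prod_mul w (fun a : ℝ => a * (h a * w a))
    have t3 : ∫ pr : ℝ × ℝ, (pr.1 * w pr.1) * (h pr.2 * w pr.2) ∂(μ.prod μ)
        = (∫ u, u * w u ∂μ) * (∫ u, h u * w u ∂μ) :=
      integral_prod_mul (fun a : ℝ => a * w a) (fun a : ℝ => h a * w a)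
    have t4 : ∫ pr : ℝ × ℝ, (h pr.1 * w pr.1) * (pr.2 * w pr.2) ∂(μ.prod μ)
        = (∫ u, h u * w u ∂μ) * (∫ u, u * w u ∂μ) :=
      integral_prod_mul (fun a : ℝ => h a * w a) (fun a : ℝ => a * w a)
    rw [hAeq, integral_sub i12 i34, integral_add iT1 iT2,
      integral_add iT3 iT4, t1, t2, t3, t4]
    ring
  rw [hexp] at hApos
  rw [m0, m1, n0, n1]
  linarith

lemma V_eq {q x : ℝ} (hq : -1 < q) (hx : 0 < x) :
    V q x = (Real.sqrt π)⁻¹ * Mk q (-(1:ℝ)/2) (x^2) := by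
  have hΓ : (0:ℝ) < Real.Gamma (q+1) := Real.Gamma_pos_of_pos (by linarith)
  have hπ : (0:ℝ) < Real.sqrt π := Real.sqrt_pos.mpr Real.pi_pos
  rw [V, stepA hx]
  have h1 : ∀ s ∈ Ioi (0:ℝ), Real.exp (-(x^2+s)) * s ^ q * (x^2+s) ^ (-(1:ℝ)/2) / 2
      = ((Real.exp (x^2))⁻¹ / 2) * (Real.exp (-s) * s ^ q * (x^2+s) ^ (-(1:ℝ)/2)) := by
    intro s hs
    rw [show -(x^2+s) = -x^2 + -s by ring, Real.exp_add, ← Real.exp_neg]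
    ring
  rw [setIntegral_congr_fun measurableSet_Ioi h1, integral_const_mul]
  have h2 := stepBC hq hx
  have hexp : (0:ℝ) < Real.exp (x^2) := Real.exp_pos _
  field_simp
  nlinarith [h2]

section concave

variable {q : ℝ} (hq : -1 < q)

include hq in
/-- first derivative of `Mk q (-1/2)` -/
lemma dM0 {z : ℝ} (hz : 0 < z) :
    HasDerivAt (Mk q (-(1:ℝ)/2)) (-Mk q ((1:ℝ)/2) z) z := by
  have := hasDerivAt_Mk (q := q) (k := -(1:ℝ)/2) hq (by norm_num) hz
  rwa [show -(1:ℝ)/2 + 1 = (1:ℝ)/2 by norm_num] at this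

include hq in
lemma dM1 {z : ℝ} (hz : 0 < z) :
    HasDerivAt (Mk q ((1:ℝ)/2)) (-Mk q ((3:ℝ)/2) z) z := by
  have := hasDerivAt_Mk (q := q) (k := (1:ℝ)/2) hq (by norm_num) hz
  rwa [show (1:ℝ)/2 + 1 = (3:ℝ)/2 by norm_num] at this

/-- log of `Mk q (-1/2)` after exponential change of variables -/
noncomputable def G (q t : ℝ) : ℝ := Real.log (Mk q (-(1:ℝ)/2) (Real.exp t))

/-- its derivative -/
noncomputable def ψ (q t : ℝ) : ℝ :=
  -Mk q ((1:ℝ)/2) (Real.exp t) * Real.exp t / Mk q (-(1:ℝ)/2) (Real.exp t)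

include hq in
lemma hG (t : ℝ) : HasDerivAt (G q) (ψ q t) t := by
  have hz : (0:ℝ) < Real.exp t := Real.exp_pos t
  have h1 : HasDerivAt (fun t : ℝ => Mk q (-(1:ℝ)/2) (Real.exp t))
      (-Mk q ((1:ℝ)/2) (Real.exp t) * Real.exp t) t :=
    (dM0 hq hz).comp t (Real.hasDerivAt_exp t)
  exact h1.log (Mk_pos hq (by norm_num) hz).ne'

include hq in
lemma hψ (t : ℝ) : ∃ d : ℝ, HasDerivAt (ψ q) d t ∧ d < 0 := by
  have hz : (0:ℝ) < Real.exp t := Real.exp_pos t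
  set z := Real.exp t with hzdef
  have hM0 := Mk_pos (q := q) (k := -(1:ℝ)/2) hq (by norm_num) hz
  have hM1 := Mk_pos (q := q) (k := (1:ℝ)/2) hq (by norm_num) hz
  have hN0 := Mk_pos (q := q+1) (k := (1:ℝ)/2) (by linarith) (by norm_num) hz
  have hN1 := Mk_pos (q := q+1) (k := (3:ℝ)/2) (by linarith) (by norm_num) hz
  -- derivative of numerator
  have hnum : HasDerivAt (fun t : ℝ => -Mk q ((1:ℝ)/2) (Real.exp t) * Real.exp t)
      (Mk q ((3:ℝ)/2) z * z * z - Mk q ((1:ℝ)/2) z * z) t := by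
    have h1 : HasDerivAt (fun t : ℝ => Mk q ((1:ℝ)/2) (Real.exp t))
        (-Mk q ((3:ℝ)/2) z * z) t := by
      have := (dM1 hq (Real.exp_pos t)).comp t (Real.hasDerivAt_exp t); exact this
    have := (h1.fun_neg).fun_mul (Real.hasDerivAt_exp t)
    refine this.congr_deriv ?_
    rw [← hzdef]
    ring
  have hden : HasDerivAt (fun t : ℝ => Mk q (-(1:ℝ)/2) (Real.exp t))
      (-Mk q ((1:ℝ)/2) z * z) t := by
    have := (dM0 hq (Real.exp_pos t)).comp t (Real.hasDerivAt_exp t); exact this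
  have hd := hnum.div hden hM0.ne'
  refine ⟨_, hd, ?_⟩
  apply div_neg_of_neg_of_pos
  · -- numerator of quotient rule is negative
    have e1 := ibp (q := q) (k := (1:ℝ)/2) hq (by norm_num) hz
    have e2 := ibp (q := q) (k := (3:ℝ)/2) hq (by norm_num) hz
    rw [show (1:ℝ)/2 - 1 = -(1:ℝ)/2 by norm_num] at e1
    rw [show (3:ℝ)/2 - 1 = (1:ℝ)/2 by norm_num] at e2
    have hch := cheb hq hz
    have key : (Mk q ((3:ℝ)/2) z * z * z - Mk q ((1:ℝ)/2) z * z) * Mk q (-(1:ℝ)/2) z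
        - (-Mk q ((1:ℝ)/2) z * z) * (-Mk q ((1:ℝ)/2) z * z)
        = (q+1) * z * (Mk q ((1:ℝ)/2) z * Mk (q+1) ((1:ℝ)/2) z
            - Mk (q+1) ((3:ℝ)/2) z * Mk q (-(1:ℝ)/2) z) := by
      linear_combination (z * Mk q ((1:ℝ)/2) z) * e1 - (z * Mk q (-(1:ℝ)/2) z) * e2
    rw [key]
    have : Mk q ((1:ℝ)/2) z * Mk (q+1) ((1:ℝ)/2) z
        - Mk (q+1) ((3:ℝ)/2) z * Mk q (-(1:ℝ)/2) z < 0 := by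
      nlinarith [hch]
    have hp : (0:ℝ) < (q+1) * z := by
      have : (0:ℝ) < q + 1 := by linarith
      positivity
    nlinarith
  · positivity

include hq in
lemma G_strictConcave : StrictConcaveOn ℝ univ (G q) := by
  apply strictConcaveOn_of_deriv2_neg convex_univ
  · exact fun t _ => ((hG hq t).continuousAt).continuousWithinAt
  · intro t _
    obtain ⟨d, hd, hdneg⟩ := hψ hq t
    have h1 : deriv (G q) = ψ q := funext fun s => (hG hq s).deriv
    have : deriv^[2] (G q) t = deriv (ψ q) t := by
      rw [show deriv^[2] (G q) = deriv (deriv (G q)) from rfl, h1]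
    rw [this, hd.deriv]
    exact hdneg

end concave

end Stmt5

open Stmt5 in
theorem stmt_5 (q : ℝ) (hq : -1 < q) (x y : ℝ) (hx : 0 < x) (hy : 0 < y) (hxy : x ≠ y) :
    Real.sqrt (V q x * V q y) < V q (Real.sqrt (x * y)) := by
  have hxy0 : 0 < x * y := mul_pos hx hy
  have hs : 0 < Real.sqrt (x * y) := Real.sqrt_pos.mpr hxy0
  have hx2 : (0:ℝ) < x^2 := by positivity
  have hy2 : (0:ℝ) < y^2 := by positivity
  have hA := Mk_pos (q := q) (k := -(1:ℝ)/2) hq (by norm_num) hx2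
  have hB := Mk_pos (q := q) (k := -(1:ℝ)/2) hq (by norm_num) hy2
  have hCpos := Mk_pos (q := q) (k := -(1:ℝ)/2) hq (by norm_num) hxy0
  set A := Mk q (-(1:ℝ)/2) (x^2) with hAdef
  set B := Mk q (-(1:ℝ)/2) (y^2) with hBdef
  set C := Mk q (-(1:ℝ)/2) (x*y) with hCdef
  have hπ : (0:ℝ) < Real.sqrt π := Real.sqrt_pos.mpr Real.pi_pos
  -- the midpoint inequality coming from strict concavity
  have hne : Real.log (x^2) ≠ Real.log (y^2) := by
    intro h
    have h2 : x^2 = y^2 := by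
      have := congrArg Real.exp h
      rwa [Real.exp_log hx2, Real.exp_log hy2] at this
    have : x = y := by
      have hx' : x = Real.sqrt (x^2) := (Real.sqrt_sq hx.le).symm
      rw [hx', h2, Real.sqrt_sq hy.le]
    exact hxy this
  have hC := (G_strictConcave hq).2 (mem_univ (Real.log (x^2))) (mem_univ (Real.log (y^2)))
    hne (by norm_num : (0:ℝ) < 1/2) (by norm_num : (0:ℝ) < 1/2) (by norm_num)
  have harg : (1/2:ℝ) • Real.log (x^2) + (1/2:ℝ) • Real.log (y^2) = Real.log (x*y) := by
    rw [smul_eq_mul, smul_eq_mul, Real.log_pow, Real.log_pow, Real.log_mul hx.ne' hy.ne']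
    push_cast
    ring
  rw [harg] at hC
  have hGx : G q (Real.log (x^2)) = Real.log A := by
    rw [G, Real.exp_log hx2]
  have hGy : G q (Real.log (y^2)) = Real.log B := by
    rw [G, Real.exp_log hy2]
  have hGxy : G q (Real.log (x*y)) = Real.log C := by
    rw [G, Real.exp_log hxy0]
  rw [hGx, hGy, hGxy, smul_eq_mul, smul_eq_mul] at hC
  -- deduce A * B < C^2
  have hlog : Real.log (A * B) < Real.log (C^2) := by
    rw [Real.log_mul hA.ne' hB.ne', Real.log_pow]
    push_cast
    linarith
  have hABC : A * B < C^2 := by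
    have := Real.exp_lt_exp.mpr hlog
    rwa [Real.exp_log (by positivity), Real.exp_log (by positivity)] at this
  -- rewrite V's
  have hVx : V q x = (Real.sqrt π)⁻¹ * A := V_eq hq hx
  have hVy : V q y = (Real.sqrt π)⁻¹ * B := V_eq hq hy
  have hVs : V q (Real.sqrt (x*y)) = (Real.sqrt π)⁻¹ * C := by
    rw [V_eq hq hs, Real.sq_sqrt hxy0.le]
  rw [hVx, hVy, hVs]
  rw [show (Real.sqrt π)⁻¹ * A * ((Real.sqrt π)⁻¹ * B)
      = ((Real.sqrt π)⁻¹)^2 * (A*B) by ring,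
    Real.sqrt_mul (by positivity) (A*B),
    Real.sqrt_sq (by positivity)]
  have hsq : Real.sqrt (A*B) < C := by
    have h1 : Real.sqrt (A*B) < Real.sqrt (C^2) :=
      Real.sqrt_lt_sqrt (by positivity) hABC
    rwa [Real.sqrt_sq hCpos.le] at h1
  exact mul_lt_mul_of_pos_left hsq (by positivity)
end

section
/- Let q ≥ 0 and let a ≥ 2 and b ≥ 1. Then for all x, y > 0 with x ≠ y and all α ∈ (0,1), one has V_q((α·x^a + (1-α)·y^a)^{1/a}) < (α·(V_q(x))^b + (1-α)·(V_q(y))^b)^{1/b}; that is, V_q is strictly (a,b)-convex with respect to power means on (0,∞). -/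
open Real MeasureTheory Set

open Filter Topology

noncomputable def W (q s : ℝ) : ℝ :=
  ∫ u in Set.Ioi (0:ℝ), Real.exp (-u) * u ^ q * (s + u) ^ (-(1/2) : ℝ)

lemma W_integrableOn {q s : ℝ} (hq : 0 ≤ q) (hs : 0 < s) :
    IntegrableOn (fun u => Real.exp (-u) * u ^ q * (s + u) ^ (-(1/2) : ℝ))
      (Set.Ioi (0:ℝ)) := by
  have hG : IntegrableOn (fun u : ℝ => Real.exp (-u) * u ^ q) (Set.Ioi (0:ℝ)) := by
    have := Real.GammaIntegral_convergent (s := q + 1) (by linarith)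
    simpa using this
  have hG' : IntegrableOn (fun u : ℝ => s ^ (-(1/2) : ℝ) * (Real.exp (-u) * u ^ q))
      (Set.Ioi (0:ℝ)) := hG.const_mul _
  refine hG'.integrable.mono' ?_ ?_
  · apply ContinuousOn.aestronglyMeasurable ?_ measurableSet_Ioi
    refine ContinuousOn.mul (ContinuousOn.mul ?_ ?_) ?_
    · exact (Real.continuous_exp.comp continuous_neg).continuousOn
    · exact fun u hu =>
        (Real.continuousAt_rpow_const u q (Or.inl (ne_of_gt hu))).continuousWithinAt
    · exact fun u hu => ((Real.continuousAt_rpow_const (s + u) _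
        (Or.inl (ne_of_gt (by have : (0:ℝ) < u := hu; linarith)))).comp (by fun_prop)).continuousWithinAt
  · filter_upwards [ae_restrict_mem measurableSet_Ioi] with u hu
    have hu' : (0:ℝ) < u := hu
    have h1 : (s + u) ^ (-(1/2) : ℝ) ≤ s ^ (-(1/2) : ℝ) :=
      Real.rpow_le_rpow_of_nonpos hs (by linarith) (by norm_num)
    have h2 : (0:ℝ) ≤ Real.exp (-u) * u ^ q := by positivity
    rw [Real.norm_eq_abs, abs_of_nonneg (by positivity)]
    calc Real.exp (-u) * u ^ q * (s + u) ^ (-(1/2) : ℝ)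
        ≤ Real.exp (-u) * u ^ q * s ^ (-(1/2) : ℝ) := by
          exact mul_le_mul_of_nonneg_left h1 h2
      _ = s ^ (-(1/2) : ℝ) * (Real.exp (-u) * u ^ q) := by ring

lemma sq_rpow_half {T : ℝ} (hT : 0 ≤ T) : (T ^ ((1:ℝ)/2)) ^ 2 = T := by
  rw [← Real.rpow_natCast (T ^ ((1:ℝ)/2)) 2, ← Real.rpow_mul hT]
  norm_num

lemma V_repr {q x : ℝ} (hq : 0 ≤ q) (hx : 0 < x) :
    V q x = (Real.Gamma (q + 1))⁻¹ * W q (x ^ 2) := by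
  have hΓ : 0 < Real.Gamma (q + 1) := Real.Gamma_pos_of_pos (by linarith)
  set φ : ℝ → ℝ := fun u => (x ^ 2 + u) ^ ((1:ℝ)/2) with hφ
  have hφpos : ∀ u ∈ Set.Ioi (0:ℝ), 0 < x ^ 2 + u := fun u hu => by
    have : (0:ℝ) < u := hu; positivity
  have hderiv : ∀ u ∈ Set.Ioi (0:ℝ),
      HasDerivWithinAt φ ((1/2) * (x ^ 2 + u) ^ (-(1/2) : ℝ)) (Set.Ioi 0) u := by
    intro u hu
    have h1 : HasDerivAt (fun u : ℝ => x ^ 2 + u) 1 u :=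
      (hasDerivAt_id u).const_add _
    have h2 : HasDerivAt (fun r : ℝ => r ^ ((1:ℝ)/2)) ((1/2) * (x^2+u) ^ ((1:ℝ)/2 - 1))
        (x ^ 2 + u) := by
      simpa using Real.hasDerivAt_rpow_const (x := x^2+u) (p := (1:ℝ)/2)
        (Or.inl (ne_of_gt (hφpos u hu)))
    have := h2.comp u h1
    simp only [mul_one] at this
    rw [show ((1:ℝ)/2 - 1) = -(1/2) by norm_num] at this
    exact this.hasDerivWithinAt
  have hinj : Set.InjOn φ (Set.Ioi 0) := by
    intro u hu v hv h
    have h1 := congrArg (fun r : ℝ => r ^ (2:ℝ)) h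
    simp only [hφ] at h1
    rw [← Real.rpow_mul (le_of_lt (hφpos u hu)), ← Real.rpow_mul (le_of_lt (hφpos v hv))] at h1
    norm_num at h1
    linarith
  have himg : φ '' Set.Ioi 0 = Set.Ioi x := by
    ext t
    constructor
    · rintro ⟨u, hu, rfl⟩
      have h0 : (0:ℝ) < u := hu
      have h1 : (x ^ 2) ^ ((1:ℝ)/2) < (x ^ 2 + u) ^ ((1:ℝ)/2) :=
        Real.rpow_lt_rpow (by positivity) (by linarith) (by norm_num)
      have hx2 : ((x ^ 2 : ℝ)) ^ ((1:ℝ)/2) = x := by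
        rw [← Real.rpow_natCast x 2, ← Real.rpow_mul (le_of_lt hx)]
        norm_num
      rw [hx2] at h1
      exact h1
    · intro ht
      have hxt : x < t := ht
      refine ⟨t ^ 2 - x ^ 2, ?_, ?_⟩
      · have : x ^ 2 < t ^ 2 := by nlinarith
        simpa [Set.mem_Ioi] using sub_pos.mpr this
      · simp only [hφ]
        rw [(by ring : x ^ 2 + (t ^ 2 - x ^ 2) = t ^ 2), ← Real.rpow_natCast t 2,
          ← Real.rpow_mul (by linarith : (0:ℝ) ≤ t)]
        norm_num
  have hCV := MeasureTheory.integral_image_eq_integral_abs_deriv_smul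
    measurableSet_Ioi hderiv hinj (fun t => Real.exp (-t ^ 2) * (t ^ 2 - x ^ 2) ^ q)
  rw [himg] at hCV
  rw [V, hCV, W, ← MeasureTheory.integral_const_mul, ← MeasureTheory.integral_const_mul]
  apply MeasureTheory.setIntegral_congr_fun measurableSet_Ioi
  intro u hu
  have h0 : (0:ℝ) < u := hu
  have hpos := hφpos u hu
  have hφsq : (φ u) ^ 2 = x ^ 2 + u := sq_rpow_half (le_of_lt hpos)
  simp only [smul_eq_mul, hφsq]
  rw [abs_of_nonneg (by positivity)]
  have h3 : (x ^ 2 + u - x ^ 2) = u := by ring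
  rw [h3]
  rw [(by ring : -(x ^ 2 + u) = -x^2 + -u), Real.exp_add, div_eq_mul_inv]
  have hexp : Real.exp (x ^ 2) * Real.exp (-x ^ 2) = 1 := by
    rw [← Real.exp_add]; simp
  linear_combination ((Real.Gamma (q+1))⁻¹ * (x^2+u) ^ (-(1/2):ℝ) * Real.exp (-u) * u^q) * hexp

lemma strictConvexOn_rpow_neg_half :
    StrictConvexOn ℝ (Set.Ioi (0:ℝ)) fun r : ℝ => r ^ (-(1/2) : ℝ) := by
  apply strictConvexOn_of_deriv2_pos (convex_Ioi 0)
  · exact fun r hr =>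
      (Real.continuousAt_rpow_const r _ (Or.inl (ne_of_gt hr))).continuousWithinAt
  · intro r hr
    rw [interior_Ioi] at hr
    have hd1 : deriv (fun x : ℝ => x ^ (-(1/2) : ℝ)) =ᶠ[𝓝 r]
        fun x => (-(1/2) : ℝ) * x ^ (-(3/2) : ℝ) := by
      filter_upwards [eventually_ne_nhds (ne_of_gt hr)] with x hx
      rw [Real.deriv_rpow_const x]
      norm_num
    have h2 : deriv^[2] (fun x : ℝ => x ^ (-(1/2) : ℝ)) r
        = deriv (fun x : ℝ => (-(1/2) : ℝ) * x ^ (-(3/2) : ℝ)) r := by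
      simp only [Function.iterate_succ, Function.iterate_zero, Function.comp_apply, id]
      exact hd1.deriv_eq
    rw [h2, deriv_const_mul _ ((Real.hasDerivAt_rpow_const (Or.inl (ne_of_gt hr))).differentiableAt),
      Real.deriv_rpow_const r]
    have : (0:ℝ) < r ^ (-(3/2) - 1 : ℝ) := Real.rpow_pos_of_pos hr _
    nlinarith

lemma integral_pos_Ioi {f : ℝ → ℝ} (hi : IntegrableOn f (Set.Ioi (0:ℝ)))
    (hpos : ∀ u ∈ Set.Ioi (0:ℝ), 0 < f u) : 0 < ∫ u in Set.Ioi (0:ℝ), f u := by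
  rw [MeasureTheory.setIntegral_pos_iff_support_of_nonneg_ae ?_ hi]
  · refine lt_of_lt_of_le ?_ (measure_mono (fun u hu =>
      Set.mem_inter (ne_of_gt (hpos u hu)) hu))
    simp [Real.volume_Ioi]
  · filter_upwards [ae_restrict_mem measurableSet_Ioi] with u hu using le_of_lt (hpos u hu)

lemma W_pos {q s : ℝ} (hq : 0 ≤ q) (hs : 0 < s) : 0 < W q s := by
  refine integral_pos_Ioi (W_integrableOn hq hs) fun u hu => ?_
  have h0 : (0:ℝ) < u := hu
  have : (0:ℝ) < s + u := by linarith
  positivity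

lemma W_mono {q s s' : ℝ} (hq : 0 ≤ q) (hs : 0 < s) (h : s ≤ s') : W q s' ≤ W q s := by
  refine MeasureTheory.setIntegral_mono_on (W_integrableOn hq (lt_of_lt_of_le hs h))
    (W_integrableOn hq hs) measurableSet_Ioi fun u hu => ?_
  have h0 : (0:ℝ) < u := hu
  refine mul_le_mul_of_nonneg_left ?_ (by positivity)
  exact Real.rpow_le_rpow_of_nonpos (by linarith) (by linarith) (by norm_num)

lemma W_strictConvex {q s1 s2 α : ℝ} (hq : 0 ≤ q) (h1 : 0 < s1) (h2 : 0 < s2)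
    (hne : s1 ≠ s2) (hα0 : 0 < α) (hα1 : α < 1) :
    W q (α * s1 + (1 - α) * s2) < α * W q s1 + (1 - α) * W q s2 := by
  set s0 := α * s1 + (1 - α) * s2 with hs0def
  have hs0 : 0 < s0 := by nlinarith
  set f : ℝ → ℝ → ℝ := fun s u => Real.exp (-u) * u ^ q * (s + u) ^ (-(1/2) : ℝ) with hf
  have hi1 := W_integrableOn hq h1
  have hi2 := W_integrableOn hq h2
  have hi0 := W_integrableOn hq hs0
  have hi1' : IntegrableOn (fun u => α * f s1 u) (Set.Ioi (0:ℝ)) := hi1.const_mul α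
  have hi2' : IntegrableOn (fun u => (1 - α) * f s2 u) (Set.Ioi (0:ℝ)) := hi2.const_mul (1-α)
  have hadd : IntegrableOn (fun u => α * f s1 u + (1 - α) * f s2 u) (Set.Ioi (0:ℝ)) :=
    hi1'.add hi2'
  have key : 0 < ∫ u in Set.Ioi (0:ℝ),
      (α * f s1 u + (1 - α) * f s2 u - f s0 u) := by
    refine integral_pos_Ioi (hadd.sub hi0) fun u hu => ?_
    have h0 : (0:ℝ) < u := hu
    have hcv := strictConvexOn_rpow_neg_half.2
      (show s1 + u ∈ Set.Ioi (0:ℝ) by simp only [Set.mem_Ioi]; linarith)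
      (show s2 + u ∈ Set.Ioi (0:ℝ) by simp only [Set.mem_Ioi]; linarith)
      (show s1 + u ≠ s2 + u by intro h; apply hne; linarith)
      hα0 (show (0:ℝ) < 1 - α by linarith) (show α + (1 - α) = 1 by ring)
    simp only [smul_eq_mul] at hcv
    have hs0u : α * (s1 + u) + (1 - α) * (s2 + u) = s0 + u := by
      rw [hs0def]; ring
    rw [hs0u] at hcv
    have hpos : (0:ℝ) < Real.exp (-u) * u ^ q := by positivity
    have := mul_lt_mul_of_pos_left hcv hpos
    simp only [hf]
    nlinarith [this]
  have hsplit : ∫ u in Set.Ioi (0:ℝ), (α * f s1 u + (1 - α) * f s2 u - f s0 u)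
      = α * W q s1 + (1 - α) * W q s2 - W q s0 := by
    rw [MeasureTheory.integral_sub hadd hi0,
      MeasureTheory.integral_add hi1' hi2',
      MeasureTheory.integral_const_mul, MeasureTheory.integral_const_mul]
    rfl
  rw [hsplit] at key
  linarith

theorem stmt_8 (q a b : ℝ) (hq : 0 ≤ q) (ha : 2 ≤ a) (hb : 1 ≤ b)
    (x y : ℝ) (hx : 0 < x) (hy : 0 < y) (hxy : x ≠ y)
    (α : ℝ) (hα : α ∈ Set.Ioo (0 : ℝ) 1) :
    V q ((α * x ^ a + (1 - α) * y ^ a) ^ (1 / a)) <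
      (α * (V q x) ^ b + (1 - α) * (V q y) ^ b) ^ (1 / b) := by
  obtain ⟨hα0, hα1⟩ := hα
  have ha0 : (0:ℝ) < a := by linarith
  have hb0 : (0:ℝ) < b := by linarith
  have hΓ : 0 < Real.Gamma (q + 1) := Real.Gamma_pos_of_pos (by linarith)
  set s1 := x ^ 2 with hs1
  set s2 := y ^ 2 with hs2
  have hs1p : 0 < s1 := by positivity
  have hs2p : 0 < s2 := by positivity
  have hsne : s1 ≠ s2 := by
    rcases lt_or_gt_of_ne hxy with h | h
    · exact ne_of_lt (by rw [hs1, hs2]; nlinarith)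
    · exact ne_of_gt (by rw [hs1, hs2]; nlinarith)
  set T := α * s1 + (1 - α) * s2 with hT
  have hTpos : 0 < T := by rw [hT]; nlinarith
  set z := (α * x ^ a + (1 - α) * y ^ a) ^ (1/a) with hz
  have hxa : 0 < x ^ a := Real.rpow_pos_of_pos hx a
  have hya : 0 < y ^ a := Real.rpow_pos_of_pos hy a
  have hApos : 0 < α * x ^ a + (1 - α) * y ^ a := by nlinarith
  have hzpos : 0 < z := Real.rpow_pos_of_pos hApos _
  -- Step A: T^(1/2) ≤ z
  have hx2 : x ^ a = s1 ^ (a/2) := by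
    rw [hs1, ← Real.rpow_natCast x 2, ← Real.rpow_mul hx.le]
    norm_num
    rw [mul_div_cancel₀ a two_ne_zero]
  have hy2 : y ^ a = s2 ^ (a/2) := by
    rw [hs2, ← Real.rpow_natCast y 2, ← Real.rpow_mul hy.le]
    norm_num
    rw [mul_div_cancel₀ a two_ne_zero]
  have hcvx := (convexOn_rpow (show (1:ℝ) ≤ a/2 by linarith)).2
    (show s1 ∈ Set.Ici (0:ℝ) from hs1p.le) (show s2 ∈ Set.Ici (0:ℝ) from hs2p.le)
    hα0.le (show (0:ℝ) ≤ 1 - α by linarith) (show α + (1 - α) = 1 by ring)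
  simp only [smul_eq_mul] at hcvx
  have hA : T ^ (a/2) ≤ α * x ^ a + (1 - α) * y ^ a := by
    rw [hx2, hy2, hT]; exact hcvx
  have hTz : T ^ ((1:ℝ)/2) ≤ z := by
    have h1 : (T ^ (a/2)) ^ (1/a) ≤ z :=
      Real.rpow_le_rpow (by positivity) hA (by positivity)
    rwa [← Real.rpow_mul hTpos.le,
      (show a / 2 * (1/a) = 1/2 by field_simp)] at h1
  have hThalf : 0 < T ^ ((1:ℝ)/2) := Real.rpow_pos_of_pos hTpos _
  have hzsq : T ≤ z ^ 2 := by
    have := pow_le_pow_left₀ hThalf.le hTz 2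
    rwa [sq_rpow_half hTpos.le] at this
  -- step 1 : V q z ≤ V q (T^(1/2))
  have step1 : V q z ≤ V q (T ^ ((1:ℝ)/2)) := by
    rw [V_repr hq hzpos, V_repr hq hThalf]
    refine mul_le_mul_of_nonneg_left ?_ (inv_nonneg.mpr hΓ.le)
    rw [sq_rpow_half hTpos.le]
    exact W_mono hq hTpos hzsq
  -- step 2 : strict convexity
  have step2 : V q (T ^ ((1:ℝ)/2)) < α * V q x + (1 - α) * V q y := by
    rw [V_repr hq hThalf, V_repr hq hx, V_repr hq hy, sq_rpow_half hTpos.le]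
    have hW := W_strictConvex hq hs1p hs2p hsne hα0 hα1
    have hΓi : 0 < (Real.Gamma (q + 1))⁻¹ := inv_pos.mpr hΓ
    rw [show α * ((Real.Gamma (q + 1))⁻¹ * W q s1) + (1 - α) * ((Real.Gamma (q + 1))⁻¹ * W q s2)
        = (Real.Gamma (q + 1))⁻¹ * (α * W q s1 + (1 - α) * W q s2) by ring]
    exact mul_lt_mul_of_pos_left hW hΓi
  -- step 3 : power mean on V side
  have hVx : 0 < V q x := by
    rw [V_repr hq hx]; exact mul_pos (inv_pos.mpr hΓ) (W_pos hq hs1p)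
  have hVy : 0 < V q y := by
    rw [V_repr hq hy]; exact mul_pos (inv_pos.mpr hΓ) (W_pos hq hs2p)
  set M := α * V q x + (1 - α) * V q y with hM
  have hMpos : 0 < M := by rw [hM]; nlinarith
  have hBcv := (convexOn_rpow hb).2
    (show V q x ∈ Set.Ici (0:ℝ) from hVx.le) (show V q y ∈ Set.Ici (0:ℝ) from hVy.le)
    hα0.le (show (0:ℝ) ≤ 1 - α by linarith) (show α + (1 - α) = 1 by ring)
  simp only [smul_eq_mul] at hBcv
  have hfin : M ≤ (α * (V q x) ^ b + (1 - α) * (V q y) ^ b) ^ (1/b) := by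
    have h1 : (M ^ b) ^ (1/b) ≤ (α * (V q x) ^ b + (1 - α) * (V q y) ^ b) ^ (1/b) :=
      Real.rpow_le_rpow (by positivity) hBcv (by positivity)
    rwa [← Real.rpow_mul hMpos.le, mul_one_div, div_self (ne_of_gt hb0),
      Real.rpow_one] at h1
  exact lt_of_le_of_lt step1 (lt_of_lt_of_le step2 hfin)
end
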